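/- arXiv:1406.2987 — 5 statements merged into one kernel-verified Lean document; each statement's English description precedes it below -/
import Mathlib

section
/- Let A be a commutative Hopf ℂ-algebra which is finitely generated as a ℂ-algebra, and let J be a Hopf 2-cocycle for A. Then the twisted algebra A_J is a finitely generated ℂ-algebra. -/
/-!
Write `φ ⇀ a = Σ a₁ φ(a₂)` for the action of linear functionals on a coalgebra. Then
`a ·_J b = μ (J ⇀ (a ⊗ b))`, and since `J` is convolution invertible the ordinary product is
recovered as `a b = Σ (a₁ ·_J b₁) J⁻¹(a₂ ⊗ b₂)`. The cocycle identity is exactly associativity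
of `·_J`, and normalization gives the unit.

For finite generation, the generators of `A` lie in the finite-dimensional space `W` spanned by
the `φ ⇀ a`. Let `S` be the subalgebra of `A_J` generated by `W`, and `P` the largest
`⇀`-stable subspace of `S`. Over a field, `⇀`-stability makes `P` a right coideal,
`Δ P ⊆ P ⊗ A`, so by the formula for `a b` above, `P` is closed under the ordinary product. Hence
`P` is a subalgebra of `A` containing the generators, and `S = A`.
-/

open TensorProduct

noncomputable section

namespace Twisting

/-- Convolution product of linear functionals on a coalgebra. -/
def conv {C : Type*} [AddCommMonoid C] [Module ℂ C] [CoalgebraStruct ℂ C]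
    (F G : C →ₗ[ℂ] ℂ) : C →ₗ[ℂ] ℂ :=
  LinearMap.mul' ℂ ℂ ∘ₗ TensorProduct.map F G ∘ₗ Coalgebra.comul

variable (A : Type*) [CommRing A] [HopfAlgebra ℂ A]

/-- A Hopf 2-cocycle for the Hopf algebra `A`:  a convolution-invertible linear functional
`J` on `A ⊗ A` satisfying the 2-cocycle identity
`Σ J(a₁b₁ ⊗ c) J(a₂ ⊗ b₂) = Σ J(a ⊗ b₁c₁) J(b₂ ⊗ c₂)` (expressed below as an equality of
linear functionals on `(A ⊗ A) ⊗ A`) and the normalization `J(a ⊗ 1) = ε(a) = J(1 ⊗ a)`. -/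
structure Hopf2Cocycle where
  J : A ⊗[ℂ] A →ₗ[ℂ] ℂ
  Jinv : A ⊗[ℂ] A →ₗ[ℂ] ℂ
  conv_right_inv : conv J Jinv = Coalgebra.counit
  conv_left_inv : conv Jinv J = Coalgebra.counit
  cocycle : conv (J ∘ₗ TensorProduct.map (LinearMap.mul' ℂ A) LinearMap.id)
        (LinearMap.mul' ℂ ℂ ∘ₗ TensorProduct.map J Coalgebra.counit)
      = conv (J ∘ₗ TensorProduct.map LinearMap.id (LinearMap.mul' ℂ A)
            ∘ₗ (TensorProduct.assoc ℂ A A A).toLinearMap)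
        (LinearMap.mul' ℂ ℂ ∘ₗ TensorProduct.map Coalgebra.counit J
            ∘ₗ (TensorProduct.assoc ℂ A A A).toLinearMap)
  norm_right : ∀ a : A, J (a ⊗ₜ[ℂ] 1) = Coalgebra.counit a
  norm_left : ∀ a : A, J ((1 : A) ⊗ₜ[ℂ] a) = Coalgebra.counit a

variable {A}

namespace Hopf2Cocycle

/-- The cotriangular form `R^J (a ⊗ b) = Σ J⁻¹(b₁ ⊗ a₁) J(a₂ ⊗ b₂)`. -/
def RJ (c : Hopf2Cocycle A) : A ⊗[ℂ] A →ₗ[ℂ] ℂ :=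
  conv (c.Jinv ∘ₗ (TensorProduct.comm ℂ A A).toLinearMap) c.J

/-- `J` is minimal if `R^J` is nondegenerate. -/
def Minimal (c : Hopf2Cocycle A) : Prop :=
  ∀ a : A, (∀ b : A, c.RJ (a ⊗ₜ[ℂ] b) = 0) → a = 0

/-- The multiplication `a ·_J b = Σ a₁b₁ J(a₂ ⊗ b₂)` of the twisted algebra `A_J`. -/
def mulJ (c : Hopf2Cocycle A) : A ⊗[ℂ] A →ₗ[ℂ] A :=
  (TensorProduct.rid ℂ A).toLinearMap
    ∘ₗ TensorProduct.map (LinearMap.mul' ℂ A) c.J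
    ∘ₗ Coalgebra.comul

end Hopf2Cocycle

/-- Gauge equivalence of Hopf 2-cocycles, at the level of the underlying bilinear forms:
`J'(a ⊗ b) = Σ x(a₁) x(b₁) J(a₂ ⊗ b₂) x⁻¹(a₃b₃)` for some convolution-invertible
linear functional `x` with `x(1) = 1`. -/
def GaugeEquiv (J J' : A ⊗[ℂ] A →ₗ[ℂ] ℂ) : Prop :=
  ∃ x xinv : A →ₗ[ℂ] ℂ,
    conv x xinv = Coalgebra.counit ∧ conv xinv x = Coalgebra.counit ∧
    x 1 = 1 ∧
    J' = conv (LinearMap.mul' ℂ ℂ ∘ₗ TensorProduct.map x x)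
           (conv J (xinv ∘ₗ LinearMap.mul' ℂ A))

/-- A realization of the twisted algebra `A_J` as an honest (possibly noncommutative)
`ℂ`-algebra `B`: a linear isomorphism matching the twisted multiplication `·_J` with the
multiplication of `B` and preserving units. -/
structure TwistedModel (c : Hopf2Cocycle A) (B : Type*) [Ring B] [Algebra ℂ B] where
  e : A ≃ₗ[ℂ] B
  map_one : e 1 = 1
  map_mul : ∀ a b : A, e (c.mulJ (a ⊗ₜ[ℂ] b)) = e a * e b

section Hit

open Coalgebra LinearMap WithConv

variable {R C D : Type*} [CommSemiring R] [AddCommMonoid C] [Module R C] [Coalgebra R C]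
  [AddCommMonoid D] [Module R D] [Coalgebra R D]

/-- The action `φ ⇀ c = Σ c₁ φ(c₂)` of the dual algebra on a coalgebra. -/
def hit (φ : C →ₗ[R] R) : C →ₗ[R] C :=
  (TensorProduct.rid R C).toLinearMap ∘ₗ φ.lTensor C ∘ₗ comul

@[simp] lemma hit_counit : hit (counit : C →ₗ[R] R) = LinearMap.id := by
  ext c
  simp [hit, Coalgebra.lTensor_counit_comul]

lemma hit_comp_hit (φ ψ : C →ₗ[R] R) :
    hit φ ∘ₗ hit ψ = hit (toConv φ * toConv ψ).ofConv := by
  have h₁ : (hit φ ∘ₗ (TensorProduct.rid R C).toLinearMap) ∘ₗ ψ.lTensor C =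
      (TensorProduct.rid R C).toLinearMap ∘ₗ
        map ((TensorProduct.rid R C).toLinearMap ∘ₗ φ.lTensor C) ψ ∘ₗ comul.rTensor C := by
    ext; simp [hit]
  have h₂ : ((TensorProduct.rid R C).toLinearMap ∘ₗ
      map ((TensorProduct.rid R C).toLinearMap ∘ₗ φ.lTensor C) ψ) ∘ₗ
        (TensorProduct.assoc R C C C).symm.toLinearMap =
      (TensorProduct.rid R C).toLinearMap ∘ₗ (mul' R R ∘ₗ map φ ψ).lTensor C := by
    ext; simp [smul_smul, mul_comm]
  calc hit φ ∘ₗ hit ψ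
      = (TensorProduct.rid R C).toLinearMap ∘ₗ
          map ((TensorProduct.rid R C).toLinearMap ∘ₗ φ.lTensor C) ψ ∘ₗ
          comul.rTensor C ∘ₗ comul := by
        nth_rw 2 [hit]; rw [← comp_assoc, ← comp_assoc, h₁]; simp only [comp_assoc]
    _ = hit (toConv φ * toConv ψ).ofConv := by
        rw [← coassoc_symm]; simp only [← comp_assoc]
        rw [h₂, hit, LinearMap.convMul_def, ofConv_toConv]
        simp only [comp_assoc, lTensor_comp]

lemma hit_comp_coalgHom (φ : C →ₗ[R] R) (f : D →ₗc[R] C) :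
    hit φ ∘ₗ (f : D →ₗ[R] C) = (f : D →ₗ[R] C) ∘ₗ hit (φ ∘ₗ (f : D →ₗ[R] C)) := by
  have h : ((f : D →ₗ[R] C) ∘ₗ (TensorProduct.rid R D).toLinearMap) ∘ₗ
      (φ ∘ₗ (f : D →ₗ[R] C)).lTensor D =
      ((TensorProduct.rid R C).toLinearMap ∘ₗ φ.lTensor C) ∘ₗ map (f : D →ₗ[R] C) f := by
    ext; simp
  rw [hit, hit, comp_assoc, comp_assoc, ← CoalgHomClass.map_comp_comul f]
  simp only [← comp_assoc, h]

lemma map_hit_hit (φ : C →ₗ[R] R) (ψ : D →ₗ[R] R) :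
    map (hit φ) (hit ψ) = hit (mul' R R ∘ₗ map φ ψ) := by
  have h : ((TensorProduct.rid R (C ⊗[R] D)).toLinearMap ∘ₗ
      (mul' R R ∘ₗ map φ ψ).lTensor (C ⊗[R] D)) ∘ₗ
      (AlgebraTensorModule.tensorTensorTensorComm R R R R C C D D).toLinearMap =
      map ((TensorProduct.rid R C).toLinearMap ∘ₗ φ.lTensor C)
        ((TensorProduct.rid R D).toLinearMap ∘ₗ ψ.lTensor D) := by
    ext; simp [smul_tmul', smul_smul, mul_comm]
  rw [hit, hit, hit, TensorProduct.comul_def, AlgebraTensorModule.map_eq]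
  simp only [← comp_assoc, h, map_comp]

lemma rTensor_hit (φ : C →ₗ[R] R) : (hit φ).rTensor D = hit (mul' R R ∘ₗ map φ counit) := by
  rw [← map_hit_hit, hit_counit]; rfl

lemma lTensor_hit (φ : C →ₗ[R] R) : (hit φ).lTensor D = hit (mul' R R ∘ₗ map counit φ) := by
  rw [← map_hit_hit, hit_counit]; rfl

end Hit

lemma hit_conv {C : Type*} [AddCommMonoid C] [Module ℂ C] [Coalgebra ℂ C] (φ ψ : C →ₗ[ℂ] ℂ) :
    hit (conv φ ψ) = hit φ ∘ₗ hit ψ :=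
  (hit_comp_hit φ ψ).symm

section RightCoideal

open Coalgebra LinearMap TensorProduct

variable {R M N C D : Type*} [CommSemiring R] [AddCommMonoid M] [Module R M]
  [AddCommMonoid N] [Module R N] [AddCommMonoid C] [Module R C] [Coalgebra R C]
  [AddCommMonoid D] [Module R D] [Coalgebra R D]

lemma mem_range_rTensor_subtype_of_forall [Module.Free R N] {V : Submodule R M}
    {z : M ⊗[R] N} (h : ∀ φ : N →ₗ[R] R, TensorProduct.rid R M (φ.lTensor M z) ∈ V) :
    z ∈ range (V.subtype.rTensor N) := by
  classical
  let b := Module.Free.chooseBasis R N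
  rw [← (equivFinsuppOfBasisRight b).symm_apply_apply z, equivFinsuppOfBasisRight_symm_apply,
    Finsupp.sum]
  refine Submodule.sum_mem _ fun i _ => ?_
  have hi : equivFinsuppOfBasisRight b z i ∈ V := by
    rw [equivFinsuppOfBasisRight_apply]
    exact h _
  exact ⟨⟨_, hi⟩ ⊗ₜ b i, rfl⟩

def IsRightCoideal (V : Submodule R C) : Prop :=
  ∀ v ∈ V, comul v ∈ range (V.subtype.rTensor C)

lemma isRightCoideal_of_hit_mem [Module.Free R C] {V : Submodule R C}
    (h : ∀ φ : C →ₗ[R] R, ∀ v ∈ V, hit φ v ∈ V) : IsRightCoideal V :=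
  fun v hv => mem_range_rTensor_subtype_of_forall fun φ => h φ v hv

lemma IsRightCoideal.hit_tmul_mem {V : Submodule R C} {W : Submodule R D}
    (hV : IsRightCoideal V) (hW : IsRightCoideal W) (Ψ : C ⊗[R] D →ₗ[R] R) {v : C} {w : D}
    (hv : v ∈ V) (hw : w ∈ W) : hit Ψ (v ⊗ₜ w) ∈ range (mapIncl V W) := by
  obtain ⟨X, hX⟩ := hV v hv
  obtain ⟨Y, hY⟩ := hW w hw
  have h : mapIncl V W ∘ₗ (TensorProduct.rid R _).toLinearMap ∘ₗ Ψ.lTensor _ ∘ₗ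
      (tensorTensorTensorComm R V C W D).toLinearMap =
      (TensorProduct.rid R _).toLinearMap ∘ₗ Ψ.lTensor _ ∘ₗ
      (AlgebraTensorModule.tensorTensorTensorComm R R R R C C D D).toLinearMap ∘ₗ
      map (V.subtype.rTensor C) (W.subtype.rTensor D) := by
    ext; simp
  refine ⟨_, LinearMap.congr_fun h (X ⊗ₜ Y) |>.trans ?_⟩
  simp [hit, hX, hY]

end RightCoideal

section HitCore

open Coalgebra LinearMap WithConv

variable {R C : Type*} [CommSemiring R] [AddCommMonoid C] [Module R C] [Coalgebra R C]
  {T : Submodule R C} {x : C}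

def hitCore (T : Submodule R C) : Submodule R C :=
  ⨅ φ : C →ₗ[R] R, T.comap (hit φ)

lemma mem_hitCore : x ∈ hitCore T ↔ ∀ φ : C →ₗ[R] R, hit φ x ∈ T := by
  simp [hitCore]

lemma hitCore_le : hitCore T ≤ T := fun x hx => by
  simpa using mem_hitCore.1 hx counit

lemma hit_mem_hitCore (hx : x ∈ hitCore T) (φ : C →ₗ[R] R) : hit φ x ∈ hitCore T :=
  mem_hitCore.2 fun ψ => by
    rw [← comp_apply, hit_comp_hit]
    exact mem_hitCore.1 hx _

lemma isRightCoideal_hitCore [Module.Free R C] : IsRightCoideal (hitCore T) :=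
  isRightCoideal_of_hit_mem fun φ _ hx => hit_mem_hitCore hx φ

end HitCore

section CoeffSpan

open Coalgebra

variable {R C : Type*} [CommRing R] [AddCommGroup C] [Module R C] [Coalgebra R C]

variable (R) in
def coeffSpan (s : Set C) : Submodule R C :=
  Submodule.span R {x | ∃ φ : C →ₗ[R] R, ∃ a ∈ s, hit φ a = x}

lemma hit_mem_coeffSpan {s : Set C} {a : C} (ha : a ∈ s) (φ : C →ₗ[R] R) :
    hit φ a ∈ coeffSpan R s :=
  Submodule.subset_span ⟨φ, a, ha, rfl⟩

lemma coeffSpan_fg [IsNoetherianRing R] (s : Finset C) : (coeffSpan R (s : Set C)).FG := by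
  classical
  let legs : Finset C := s.biUnion fun a => (ℛ R a).index.image (ℛ R a).left
  refine (Submodule.fg_span legs.finite_toSet).of_le (Submodule.span_le.2 ?_)
  rintro _ ⟨φ, a, ha, rfl⟩
  rw [hit, LinearMap.comp_apply, LinearMap.comp_apply, ← (ℛ R a).eq]
  simp only [map_sum, LinearMap.lTensor_tmul, LinearEquiv.coe_coe, TensorProduct.rid_tmul]
  exact Submodule.sum_mem _ fun i hi => Submodule.smul_mem _ _ <| Submodule.subset_span <|
    Finset.mem_biUnion.2 ⟨a, ha, Finset.mem_image_of_mem _ hi⟩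

end CoeffSpan

namespace Hopf2Cocycle

open Coalgebra LinearMap

variable (c : Hopf2Cocycle A)

lemma mulJ_eq_mul'_comp_hit : c.mulJ = mul' ℂ A ∘ₗ hit c.J := by
  have h : (mul' ℂ A ∘ₗ (TensorProduct.rid ℂ (A ⊗[ℂ] A)).toLinearMap) ∘ₗ c.J.lTensor _ =
      (TensorProduct.rid ℂ A).toLinearMap ∘ₗ map (mul' ℂ A) c.J := by
    ext; simp
  rw [mulJ, hit, ← comp_assoc, ← h]
  simp only [comp_assoc]

lemma mulJ_comp_hit_Jinv : c.mulJ ∘ₗ hit c.Jinv = mul' ℂ A := by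
  rw [mulJ_eq_mul'_comp_hit, comp_assoc, ← hit_conv, c.conv_right_inv, hit_counit, comp_id]

lemma mulJ_assoc : c.mulJ ∘ₗ c.mulJ.rTensor A =
    c.mulJ ∘ₗ c.mulJ.lTensor A ∘ₗ (TensorProduct.assoc ℂ A A A).toLinearMap := by
  have hl : hit c.J ∘ₗ (mul' ℂ A).rTensor A =
      (mul' ℂ A).rTensor A ∘ₗ hit (c.J ∘ₗ (mul' ℂ A).rTensor A) :=
    hit_comp_coalgHom c.J
      (Coalgebra.TensorProduct.map (Bialgebra.mulCoalgHom ℂ A) (CoalgHom.id ℂ A))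
  have hr : hit c.J ∘ₗ (mul' ℂ A).lTensor A =
      (mul' ℂ A).lTensor A ∘ₗ hit (c.J ∘ₗ (mul' ℂ A).lTensor A) :=
    hit_comp_coalgHom c.J
      (Coalgebra.TensorProduct.map (CoalgHom.id ℂ A) (Bialgebra.mulCoalgHom ℂ A))
  have ha (φ : A ⊗[ℂ] (A ⊗[ℂ] A) →ₗ[ℂ] ℂ) :
      hit φ ∘ₗ (TensorProduct.assoc ℂ A A A).toLinearMap =
      (TensorProduct.assoc ℂ A A A).toLinearMap ∘ₗ
        hit (φ ∘ₗ (TensorProduct.assoc ℂ A A A).toLinearMap) :=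
    hit_comp_coalgHom φ (Coalgebra.TensorProduct.assoc ℂ ℂ A A A).toCoalgHom
  have hμ : mul' ℂ A ∘ₗ (mul' ℂ A).rTensor A =
      mul' ℂ A ∘ₗ (mul' ℂ A).lTensor A ∘ₗ (TensorProduct.assoc ℂ A A A).toLinearMap := by
    ext; simp [mul_assoc]
  have hc : conv (c.J ∘ₗ (mul' ℂ A).rTensor A) (mul' ℂ ℂ ∘ₗ map c.J counit) =
      conv (c.J ∘ₗ (mul' ℂ A).lTensor A ∘ₗ (TensorProduct.assoc ℂ A A A).toLinearMap)
        (mul' ℂ ℂ ∘ₗ map counit c.J ∘ₗ (TensorProduct.assoc ℂ A A A).toLinearMap) :=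
    c.cocycle
  calc c.mulJ ∘ₗ c.mulJ.rTensor A
      = mul' ℂ A ∘ₗ (mul' ℂ A).rTensor A ∘ₗ
          hit (conv (c.J ∘ₗ (mul' ℂ A).rTensor A) (mul' ℂ ℂ ∘ₗ map c.J counit)) := by
        rw [c.mulJ_eq_mul'_comp_hit, rTensor_comp, rTensor_hit, hit_conv]
        simp only [comp_assoc]
        rw [← comp_assoc _ _ (hit c.J), hl, comp_assoc]
    _ = mul' ℂ A ∘ₗ (mul' ℂ A).lTensor A ∘ₗ (TensorProduct.assoc ℂ A A A).toLinearMap ∘ₗ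
          hit (conv (c.J ∘ₗ (mul' ℂ A).lTensor A ∘ₗ (TensorProduct.assoc ℂ A A A).toLinearMap)
            (mul' ℂ ℂ ∘ₗ map counit c.J ∘ₗ (TensorProduct.assoc ℂ A A A).toLinearMap)) := by
        rw [← hc, ← comp_assoc, hμ]; simp only [comp_assoc]
    _ = c.mulJ ∘ₗ c.mulJ.lTensor A ∘ₗ (TensorProduct.assoc ℂ A A A).toLinearMap := by
        rw [c.mulJ_eq_mul'_comp_hit, lTensor_comp, lTensor_hit, hit_conv]
        simp only [comp_assoc]
        rw [← comp_assoc _ _ (hit c.J), hr, comp_assoc, ha, ← comp_assoc _ _ (hit _), ha]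
        simp only [comp_assoc]

lemma mulJ_one_tmul (a : A) : c.mulJ (1 ⊗ₜ a) = a := by
  let f : A →ₗc[ℂ] A ⊗[ℂ] A :=
    (Coalgebra.TensorProduct.map (Bialgebra.unitBialgHom ℂ A : ℂ →ₗc[ℂ] A) (CoalgHom.id ℂ A)).comp
      (Coalgebra.TensorProduct.lid ℂ A).symm.toCoalgHom
  have hf (x : A) : (f : A →ₗ[ℂ] A ⊗[ℂ] A) x = 1 ⊗ₜ x := by simp [f]
  have hJ : c.J ∘ₗ (f : A →ₗ[ℂ] A ⊗[ℂ] A) = counit := by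
    ext x; rw [comp_apply, hf, c.norm_left]
  have h := LinearMap.congr_fun (hit_comp_coalgHom c.J f) a
  rw [hJ, hit_counit] at h
  simp only [comp_apply, id_apply, hf] at h
  rw [mulJ_eq_mul'_comp_hit, comp_apply, h, mul'_apply, one_mul]

lemma mulJ_tmul_one (a : A) : c.mulJ (a ⊗ₜ 1) = a := by
  let f : A →ₗc[ℂ] A ⊗[ℂ] A :=
    (Coalgebra.TensorProduct.map (CoalgHom.id ℂ A) (Bialgebra.unitBialgHom ℂ A : ℂ →ₗc[ℂ] A)).comp
      (Coalgebra.TensorProduct.rid ℂ ℂ A).symm.toCoalgHom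
  have hf (x : A) : (f : A →ₗ[ℂ] A ⊗[ℂ] A) x = x ⊗ₜ 1 := by simp [f]
  have hJ : c.J ∘ₗ (f : A →ₗ[ℂ] A ⊗[ℂ] A) = counit := by
    ext x; rw [comp_apply, hf, c.norm_right]
  have h := LinearMap.congr_fun (hit_comp_coalgHom c.J f) a
  rw [hJ, hit_counit] at h
  simp only [comp_apply, id_apply, hf] at h
  rw [mulJ_eq_mul'_comp_hit, comp_apply, h, mul'_apply, mul_one]

lemma hit_comp_mul' (φ : A →ₗ[ℂ] ℂ) :
    hit φ ∘ₗ mul' ℂ A =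
      c.mulJ ∘ₗ hit (conv c.Jinv (φ ∘ₗ mul' ℂ A)) := by
  rw [hit_conv, ← comp_assoc, c.mulJ_comp_hit_Jinv]
  exact hit_comp_coalgHom φ (Bialgebra.mulCoalgHom ℂ A)

end Hopf2Cocycle

def TwistedAlgebra (_c : Hopf2Cocycle A) : Type _ := A

namespace TwistedAlgebra

open LinearMap TensorProduct

variable (c : Hopf2Cocycle A)

instance : AddCommGroup (TwistedAlgebra c) := inferInstanceAs (AddCommGroup A)

instance : Module ℂ (TwistedAlgebra c) := inferInstanceAs (Module ℂ A)

def equiv : A ≃ₗ[ℂ] TwistedAlgebra c := LinearEquiv.refl ℂ A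

instance : Ring (TwistedAlgebra c) where
  mul x y := equiv c (c.mulJ ((equiv c).symm x ⊗ₜ (equiv c).symm y))
  one := equiv c 1
  mul_assoc x y z := by
    have h := LinearMap.congr_fun c.mulJ_assoc
      (((equiv c).symm x ⊗ₜ[ℂ] (equiv c).symm y) ⊗ₜ[ℂ] (equiv c).symm z)
    simp only [comp_apply, rTensor_tmul, lTensor_tmul, LinearEquiv.coe_coe,
      TensorProduct.assoc_tmul] at h
    exact congrArg (equiv c) h
  one_mul x := c.mulJ_one_tmul _
  mul_one x := c.mulJ_tmul_one _
  left_distrib x y z := by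
    change equiv c _ = equiv c _ + equiv c _
    rw [map_add, tmul_add, map_add, map_add]
  right_distrib x y z := by
    change equiv c _ = equiv c _ + equiv c _
    rw [map_add, add_tmul, map_add, map_add]
  zero_mul x := by
    change equiv c _ = 0
    rw [map_zero, zero_tmul, map_zero, map_zero]
  mul_zero x := by
    change equiv c _ = 0
    rw [map_zero, tmul_zero, map_zero, map_zero]

instance : Algebra ℂ (TwistedAlgebra c) :=
  Algebra.ofModule
    (fun r x y => by
      change equiv c _ = r • equiv c _
      rw [map_smul, ← smul_tmul', map_smul, map_smul])
    (fun r x y => by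
      change equiv c _ = r • equiv c _
      rw [map_smul, tmul_smul, map_smul, map_smul])

def model : TwistedModel c (TwistedAlgebra c) where
  e := equiv c
  map_one := rfl
  map_mul _ _ := rfl

variable {c}

lemma one_mem_hitCore (S : Subalgebra ℂ (TwistedAlgebra c)) :
    (1 : A) ∈ hitCore (S.toSubmodule.comap (equiv c).toLinearMap) := by
  refine mem_hitCore.2 fun φ => ?_
  have h1 : hit φ (1 : A) = φ 1 • (1 : A) := by
    simp [hit, Bialgebra.comul_one, Algebra.TensorProduct.one_def]
  rw [h1]
  exact Submodule.smul_mem _ _ S.one_mem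

lemma mul_mem_hitCore (S : Subalgebra ℂ (TwistedAlgebra c)) {x y : A}
    (hx : x ∈ hitCore (S.toSubmodule.comap (equiv c).toLinearMap))
    (hy : y ∈ hitCore (S.toSubmodule.comap (equiv c).toLinearMap)) :
    x * y ∈ hitCore (S.toSubmodule.comap (equiv c).toLinearMap) := by
  refine mem_hitCore.2 fun φ => ?_
  obtain ⟨z, hz⟩ := isRightCoideal_hitCore.hit_tmul_mem isRightCoideal_hitCore
    (conv c.Jinv (φ ∘ₗ mul' ℂ A)) hx hy
  rw [← mul'_apply (R := ℂ), ← comp_apply, c.hit_comp_mul', comp_apply, ← hz]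
  clear hz
  induction z using TensorProduct.induction_on with
  | zero => simp
  | tmul p q =>
    exact S.mul_mem (hitCore_le p.2) (hitCore_le q.2)
  | add z₁ z₂ h₁ h₂ => rw [map_add, map_add]; exact add_mem h₁ h₂

def hitCoreSubalgebra (S : Subalgebra ℂ (TwistedAlgebra c)) : Subalgebra ℂ A :=
  (hitCore (S.toSubmodule.comap (equiv c).toLinearMap)).toSubalgebra (one_mem_hitCore S)
    fun _ _ => mul_mem_hitCore S

end TwistedAlgebra

universe u

/-- If `A` is a finitely generated commutative Hopf `ℂ`-algebra and `J` is a
Hopf 2-cocycle for `A`, then the twisted algebra `A_J` is a finitely generated `ℂ`-algebra. -/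
theorem statement2 (A : Type u) [CommRing A] [HopfAlgebra ℂ A]
    (hfg : Algebra.FiniteType ℂ A) (c : Hopf2Cocycle A) :
    ∃ (B : Type u) (_ : Ring B) (_ : Algebra ℂ B) (_ : TwistedModel c B),
      Algebra.FiniteType ℂ B := by
  classical
  obtain ⟨s, hs⟩ := hfg.out
  obtain ⟨F, hF⟩ := coeffSpan_fg (R := ℂ) s
  let e := TwistedAlgebra.equiv c
  let S := Algebra.adjoin ℂ (e '' F)
  have hcoeff : coeffSpan ℂ (s : Set A) ≤ S.toSubmodule.comap e.toLinearMap := by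
    rw [← hF, Submodule.span_le]
    exact fun a ha => Algebra.subset_adjoin ⟨a, ha, rfl⟩
  have hsP : Algebra.adjoin ℂ (s : Set A) ≤ TwistedAlgebra.hitCoreSubalgebra S :=
    Algebra.adjoin_le fun a ha => mem_hitCore.2 fun φ => hcoeff (hit_mem_coeffSpan ha φ)
  rw [hs] at hsP
  refine ⟨_, _, _, TwistedAlgebra.model c, ⟨F.image e, ?_⟩⟩
  rw [Finset.coe_image, eq_top_iff]
  exact fun b _ => hitCore_le (hsP (Algebra.mem_top : e.symm b ∈ ⊤))

end Twisting
end
end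

section
/- Let A be a commutative Hopf ℂ-algebra, let J be a Hopf 2-cocycle for A, and let C ⊆ A be a subcoalgebra (a subspace with Δ(C) ⊆ C ⊗ C) that generates A as a ℂ-algebra. Then C generates the twisted algebra A_J as a ℂ-algebra. -/
/-!
Because `J` is convolution invertible, the product of `A` is recovered from the twisted one:
`a b = Σ (a₁ ·_J b₁) J⁻¹(a₂ ⊗ b₂)`. Hence if `D` and `E` are subcoalgebras contained in a
subspace `P` closed under `·_J`, then so is `D E`. Subcoalgebras are also closed under sums and
`ℂ 1` is one, so every element of the algebra generated by `C` lies in a subcoalgebra contained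
in `P`.
-/

open TensorProduct

noncomputable section

namespace Twisting

variable (A : Type*) [CommRing A] [HopfAlgebra ℂ A]

variable {A}

open LinearMap

section Subcoalgebra

variable {R M N : Type*} [CommSemiring R]

def IsSubcoalgebra [AddCommMonoid M] [Module R M] [CoalgebraStruct R M]
    (D : Submodule R M) : Prop :=
  ∀ x ∈ D, Coalgebra.comul (R := R) x ∈ range (mapIncl D D)

theorem IsSubcoalgebra.sup [AddCommMonoid M] [Module R M] [CoalgebraStruct R M]
    {D E : Submodule R M} (hD : IsSubcoalgebra D) (hE : IsSubcoalgebra E) :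
    IsSubcoalgebra (D ⊔ E) := by
  intro x hx
  obtain ⟨d, hd, e, he, rfl⟩ := Submodule.mem_sup.1 hx
  rw [map_add]
  exact add_mem (range_mapIncl_mono le_sup_left le_sup_left (hD d hd))
    (range_mapIncl_mono le_sup_right le_sup_right (hE e he))

theorem comul_tmul_mem_range_map_mapIncl [AddCommMonoid M] [Module R M] [CoalgebraStruct R M]
    [AddCommMonoid N] [Module R N] [CoalgebraStruct R N] {D : Submodule R M} {E : Submodule R N}
    {x : M} {y : N} (hx : Coalgebra.comul (R := R) x ∈ range (mapIncl D D))
    (hy : Coalgebra.comul (R := R) y ∈ range (mapIncl E E)) :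
    Coalgebra.comul (R := R) (x ⊗ₜ[R] y) ∈ range (map (mapIncl D E) (mapIncl D E)) := by
  obtain ⟨a, ha⟩ := hx
  obtain ⟨b, hb⟩ := hy
  refine ⟨tensorTensorTensorComm R D D E E (a ⊗ₜ b), ?_⟩
  rw [TensorProduct.comul_tmul, ← ha, ← hb, ← map_tmul (mapIncl D D) (mapIncl E E),
    AlgebraTensorModule.tensorTensorTensorComm_eq]
  exact (DFunLike.congr_fun (tensorTensorTensorComm_comp_map (f := D.subtype) (g := D.subtype)
    (h := E.subtype) (j := E.subtype)) (a ⊗ₜ b)).symm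

variable [Semiring M] [Bialgebra R M]

theorem isSubcoalgebra_one : IsSubcoalgebra (1 : Submodule R M) := by
  rintro _ ⟨r, rfl⟩
  have h1 : (1 : M) ∈ (1 : Submodule R M) := Submodule.one_le.1 le_rfl
  refine ⟨r • (⟨1, h1⟩ ⊗ₜ ⟨1, h1⟩), ?_⟩
  simp [Algebra.TensorProduct.one_def]

theorem range_mapIncl_mul_le (D D' E E' : Submodule R M) :
    range (mapIncl D D') * range (mapIncl E E') ≤ range (mapIncl (D * E) (D' * E')) := by
  simp only [range_mapIncl, Submodule.map₂_eq_span_image2, Submodule.span_mul_span]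
  refine Submodule.span_mono ?_
  rintro _ ⟨_, ⟨d, hd, d', hd', rfl⟩, _, ⟨e, he, e', he', rfl⟩, rfl⟩
  exact ⟨d * e, Submodule.mul_mem_mul hd he, d' * e', Submodule.mul_mem_mul hd' he',
    (Algebra.TensorProduct.tmul_mul_tmul d e d' e').symm⟩

theorem IsSubcoalgebra.mul {D E : Submodule R M} (hD : IsSubcoalgebra D)
    (hE : IsSubcoalgebra E) : IsSubcoalgebra (D * E) := by
  intro x hx
  refine Submodule.mul_induction_on hx (fun d hd e he => ?_) (fun x y hx hy => ?_)
  · rw [Bialgebra.comul_mul]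
    exact range_mapIncl_mul_le D D E E (Submodule.mul_mem_mul (hD d hd) (hE e he))
  · rw [map_add]
    exact add_mem hx hy

end Subcoalgebra

section Twist

variable {C : Type*} [AddCommMonoid C] [Module ℂ C]

section Module

variable {B : Type*} [AddCommMonoid B] [Module ℂ B] [CoalgebraStruct ℂ C]

def twist (f : C →ₗ[ℂ] B) (φ : C →ₗ[ℂ] ℂ) : C →ₗ[ℂ] B :=
  (TensorProduct.rid ℂ B).toLinearMap ∘ₗ map f φ ∘ₗ Coalgebra.comul

theorem twist_apply_mem_range {M : Type*} [AddCommMonoid M] [Module ℂ M] (f : C →ₗ[ℂ] B)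
    (φ : C →ₗ[ℂ] ℂ) (g : M →ₗ[ℂ] C) {x : C}
    (hx : Coalgebra.comul (R := ℂ) x ∈ range (map g g)) : twist f φ x ∈ range (f ∘ₗ g) := by
  obtain ⟨u, hu⟩ := hx
  refine ⟨TensorProduct.rid ℂ M (map LinearMap.id (φ ∘ₗ g) u), ?_⟩
  rw [twist, comp_apply, comp_apply, comp_apply, ← hu]
  clear hu
  induction u using TensorProduct.induction_on <;> simp_all

end Module

variable {B : Type*} [Semiring B] [Algebra ℂ B]

theorem twist_eq_convMul [CoalgebraStruct ℂ C] (f : C →ₗ[ℂ] B) (φ : C →ₗ[ℂ] ℂ) :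
    twist f φ = (WithConv.toConv f * WithConv.toConv (Algebra.linearMap ℂ B ∘ₗ φ)).ofConv := by
  have h : (TensorProduct.rid ℂ B).toLinearMap ∘ₗ map f φ
      = mul' ℂ B ∘ₗ map f (Algebra.linearMap ℂ B ∘ₗ φ) := by
    ext x r
    simp [Algebra.smul_def, Algebra.commutes]
  rw [twist, ← comp_assoc, h]
  rfl

variable [Coalgebra ℂ C]

theorem twist_twist (f : C →ₗ[ℂ] B) (φ ψ : C →ₗ[ℂ] ℂ) :
    twist (twist f φ) ψ = twist f (conv φ ψ) := by
  have h : Algebra.linearMap ℂ B ∘ₗ conv φ ψ = (WithConv.toConv (Algebra.linearMap ℂ B ∘ₗ φ) *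
      WithConv.toConv (Algebra.linearMap ℂ B ∘ₗ ψ)).ofConv :=
    algHom_comp_convMul_distrib (Algebra.ofId ℂ B) (WithConv.toConv φ) (WithConv.toConv ψ)
  simp only [twist_eq_convMul, h, WithConv.toConv_ofConv, mul_assoc]

theorem twist_counit (f : C →ₗ[ℂ] B) : twist f Coalgebra.counit = f := by
  rw [twist_eq_convMul]
  exact congrArg WithConv.ofConv (mul_one (WithConv.toConv f))

end Twist

namespace Hopf2Cocycle

variable {A : Type*} [CommRing A] [HopfAlgebra ℂ A]

theorem mulJ_eq_twist (c : Hopf2Cocycle A) : c.mulJ = twist (mul' ℂ A) c.J := rfl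

theorem mul'_eq_twist_mulJ (c : Hopf2Cocycle A) : mul' ℂ A = twist c.mulJ c.Jinv := by
  rw [mulJ_eq_twist, twist_twist, c.conv_right_inv, twist_counit]

theorem mul_le_of_isSubcoalgebra (c : Hopf2Cocycle A) {P D E : Submodule ℂ A}
    (hP : ∀ x ∈ P, ∀ y ∈ P, c.mulJ (x ⊗ₜ[ℂ] y) ∈ P) (hD : IsSubcoalgebra D)
    (hE : IsSubcoalgebra E) (hDP : D ≤ P) (hEP : E ≤ P) : D * E ≤ P := by
  have hrange : range (c.mulJ ∘ₗ mapIncl D E) ≤ P := by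
    rw [range_le_iff_comap, eq_top_iff, ← TensorProduct.span_tmul_eq_top, Submodule.span_le]
    rintro _ ⟨d, e, rfl⟩
    exact hP _ (hDP d.2) _ (hEP e.2)
  refine Submodule.mul_le.2 fun d hd e he => hrange ?_
  rw [← mul'_apply (R := ℂ), mul'_eq_twist_mulJ]
  exact twist_apply_mem_range _ _ _ (comul_tmul_mem_range_map_mapIncl (hD d hd) (hE e he))

theorem exists_isSubcoalgebra_of_mem_adjoin (c : Hopf2Cocycle A) {C P : Submodule ℂ A}
    (hC : IsSubcoalgebra C) (hCP : C ≤ P) (hP1 : (1 : A) ∈ P)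
    (hP : ∀ x ∈ P, ∀ y ∈ P, c.mulJ (x ⊗ₜ[ℂ] y) ∈ P) {x : A}
    (hx : x ∈ Algebra.adjoin ℂ (C : Set A)) :
    ∃ D : Submodule ℂ A, IsSubcoalgebra D ∧ D ≤ P ∧ x ∈ D := by
  induction hx using Algebra.adjoin_induction with
  | mem x hx => exact ⟨C, hC, hCP, hx⟩
  | algebraMap r =>
    exact ⟨1, isSubcoalgebra_one, Submodule.one_le.2 hP1, Submodule.algebraMap_mem r⟩
  | add x y _ _ hx hy =>
    obtain ⟨D, hD, hDP, hxD⟩ := hx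
    obtain ⟨E, hE, hEP, hyE⟩ := hy
    exact ⟨D ⊔ E, hD.sup hE, sup_le hDP hEP,
      add_mem (Submodule.mem_sup_left hxD) (Submodule.mem_sup_right hyE)⟩
  | mul x y _ _ hx hy =>
    obtain ⟨D, hD, hDP, hxD⟩ := hx
    obtain ⟨E, hE, hEP, hyE⟩ := hy
    exact ⟨D * E, hD.mul hE, c.mul_le_of_isSubcoalgebra hP hD hE hDP hEP,
      Submodule.mul_mem_mul hxD hyE⟩

end Hopf2Cocycle

/-- If a subcoalgebra `C` of a commutative Hopf `ℂ`-algebra `A` generates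
`A` as a `ℂ`-algebra, then `C` generates the twisted algebra `A_J` as a `ℂ`-algebra:
every subspace of `A` containing `C` and `1` and closed under the twisted product `·_J`
is all of `A`. -/
theorem statement3 (A : Type*) [CommRing A] [HopfAlgebra ℂ A] (c : Hopf2Cocycle A)
    (C : Submodule ℂ A)
    (hC : ∀ x ∈ C, Coalgebra.comul (R := ℂ) x ∈
      LinearMap.range (TensorProduct.map C.subtype C.subtype))
    (hgen : Algebra.adjoin ℂ (C : Set A) = ⊤) :
    ∀ P : Submodule ℂ A, (C : Set A) ⊆ (P : Set A) → (1 : A) ∈ P →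
      (∀ x ∈ P, ∀ y ∈ P, c.mulJ (x ⊗ₜ[ℂ] y) ∈ P) → P = ⊤ := by
  intro P hCP hP1 hP
  refine eq_top_iff.2 fun x _ => ?_
  obtain ⟨D, -, hDP, hxD⟩ :=
    c.exists_isSubcoalgebra_of_mem_adjoin hC hCP hP1 hP (hgen ▸ Algebra.mem_top)
  exact hDP hxD

end Twisting
end
end

section
/- Let A be a commutative Hopf ℂ-algebra, let I be a Hopf ideal of A with quotient Hopf algebra B = A/I and quotient map π : A → B, let J̄ be any Hopf 2-cocycle for B, and let J = J̄ ∘ (π ⊗ π), a Hopf 2-cocycle for A. Then every element a ∈ A satisfying (id ⊗ π)(Δ(a)) = a ⊗ 1_B is central in the twisted algebra A_J. -/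
/-!
Because `J = J̄ ∘ (π ⊗ π)`, the twisted product `a ·_J b = Σ a₁b₁ J̄(π a₂ ⊗ π b₂)` depends on each
factor only through its `B`-coaction `(id ⊗ π) ∘ Δ`. For a coinvariant `a` that coaction is
`a ⊗ 1`, and the normalization `J̄(1 ⊗ -) = ε = J̄(- ⊗ 1)` turns `a ·_J b` and `b ·_J a` into
the products `ab` and `ba` of `A`, which agree since `A` is commutative.
-/

open TensorProduct

noncomputable section

namespace Twisting

variable (A : Type*) [CommRing A] [HopfAlgebra ℂ A]

variable {A}

section TwistMul

variable {A B : Type*} [Semiring A] [Algebra ℂ A] [AddCommMonoid B] [Module ℂ B]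

/-- `(x ⊗ u) ⊗ (y ⊗ v) ↦ K(u ⊗ v) • x y`. -/
def twistMul (K : B ⊗[ℂ] B →ₗ[ℂ] ℂ) : (A ⊗[ℂ] B) ⊗[ℂ] (A ⊗[ℂ] B) →ₗ[ℂ] A :=
  (TensorProduct.rid ℂ A).toLinearMap ∘ₗ TensorProduct.map (LinearMap.mul' ℂ A) K
    ∘ₗ (TensorProduct.tensorTensorTensorComm ℂ A B A B).toLinearMap

@[simp]
theorem twistMul_tmul (K : B ⊗[ℂ] B →ₗ[ℂ] ℂ) (x y : A) (u v : B) :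
    twistMul K ((x ⊗ₜ[ℂ] u) ⊗ₜ[ℂ] (y ⊗ₜ[ℂ] v)) = K (u ⊗ₜ[ℂ] v) • (x * y) := by
  simp [twistMul]

variable [CoalgebraStruct ℂ B]

theorem twistMul_tmul_left_of_counit {K : B ⊗[ℂ] B →ₗ[ℂ] ℂ} {u : B}
    (hu : ∀ v, K (u ⊗ₜ[ℂ] v) = Coalgebra.counit v) (a : A) (t : A ⊗[ℂ] B) :
    twistMul K ((a ⊗ₜ[ℂ] u) ⊗ₜ[ℂ] t)
      = a * TensorProduct.rid ℂ A ((Coalgebra.counit (R := ℂ)).lTensor A t) := by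
  induction t using TensorProduct.induction_on with
  | zero => simp
  | tmul y v => simp [hu]
  | add s t hs ht => simp only [tmul_add, map_add, hs, ht, mul_add]

theorem twistMul_tmul_right_of_counit {K : B ⊗[ℂ] B →ₗ[ℂ] ℂ} {u : B}
    (hu : ∀ v, K (v ⊗ₜ[ℂ] u) = Coalgebra.counit v) (a : A) (t : A ⊗[ℂ] B) :
    twistMul K (t ⊗ₜ[ℂ] (a ⊗ₜ[ℂ] u))
      = TensorProduct.rid ℂ A ((Coalgebra.counit (R := ℂ)).lTensor A t) * a := by
  induction t using TensorProduct.induction_on with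
  | zero => simp
  | tmul y v => simp [hu]
  | add s t hs ht => simp only [add_tmul, map_add, hs, ht, add_mul]

end TwistMul

theorem rid_counit_lTensor_lTensor_comul {A B : Type*} [AddCommMonoid A] [Module ℂ A]
    [Coalgebra ℂ A] [AddCommMonoid B] [Module ℂ B] [CoalgebraStruct ℂ B]
    {π : A →ₗ[ℂ] B} (hπ : Coalgebra.counit (R := ℂ) ∘ₗ π = Coalgebra.counit) (b : A) :
    TensorProduct.rid ℂ A ((Coalgebra.counit (R := ℂ)).lTensor A
      (π.lTensor A (Coalgebra.comul b))) = b := by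
  rw [← LinearMap.comp_apply, ← LinearMap.lTensor_comp, hπ, Coalgebra.lTensor_counit_comul]
  simp

theorem Hopf2Cocycle.mulJ_eq_twistMul {A B : Type*} [CommRing A] [HopfAlgebra ℂ A]
    [AddCommMonoid B] [Module ℂ B] {c : Hopf2Cocycle A} {K : B ⊗[ℂ] B →ₗ[ℂ] ℂ}
    {π : A →ₗ[ℂ] B} (hc : c.J = K ∘ₗ TensorProduct.map π π) (x y : A) :
    c.mulJ (x ⊗ₜ[ℂ] y)
      = twistMul K (π.lTensor A (Coalgebra.comul x) ⊗ₜ[ℂ] π.lTensor A (Coalgebra.comul y)) := by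
  have h : (TensorProduct.rid ℂ A).toLinearMap ∘ₗ TensorProduct.map (LinearMap.mul' ℂ A) c.J
        ∘ₗ (TensorProduct.tensorTensorTensorComm ℂ A A A A).toLinearMap
      = twistMul K ∘ₗ TensorProduct.map (π.lTensor A) (π.lTensor A) := by
    ext x₁ x₂ y₁ y₂
    simp [hc]
  simpa [Hopf2Cocycle.mulJ, TensorProduct.comul_tmul,
    TensorProduct.AlgebraTensorModule.tensorTensorTensorComm_eq] using
    LinearMap.congr_fun h (Coalgebra.comul x ⊗ₜ[ℂ] Coalgebra.comul y)

theorem statement6_general (A B : Type*) [CommRing A] [HopfAlgebra ℂ A] [CommRing B]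
    [HopfAlgebra ℂ B]
    (π : A →ₐ[ℂ] B)
    (hcounit : Coalgebra.counit (R := ℂ) ∘ₗ π.toLinearMap = Coalgebra.counit)
    (c' : Hopf2Cocycle B) (c : Hopf2Cocycle A)
    (hc : c.J = c'.J ∘ₗ TensorProduct.map π.toLinearMap π.toLinearMap) :
    ∀ a : A, TensorProduct.map (LinearMap.id : A →ₗ[ℂ] A) π.toLinearMap
        (Coalgebra.comul (R := ℂ) a) = a ⊗ₜ[ℂ] (1 : B) →
      ∀ b : A, c.mulJ (a ⊗ₜ[ℂ] b) = c.mulJ (b ⊗ₜ[ℂ] a) := by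
  intro a ha b
  change π.toLinearMap.lTensor A (Coalgebra.comul a) = a ⊗ₜ[ℂ] (1 : B) at ha
  rw [Hopf2Cocycle.mulJ_eq_twistMul hc, Hopf2Cocycle.mulJ_eq_twistMul hc, ha,
    twistMul_tmul_left_of_counit c'.norm_left, twistMul_tmul_right_of_counit c'.norm_right,
    rid_counit_lTensor_lTensor_comul hcounit, mul_comm]

/-- Let `π : A ↠ B` be a Hopf algebra quotient of a commutative Hopf
`ℂ`-algebra `A` (quotient by a Hopf ideal), let `J̄` be any Hopf 2-cocycle for `B` and
`J = J̄ ∘ (π ⊗ π)`.  Then every `B`-coinvariant element of `A` (i.e. every `a` with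
`(id ⊗ π)(Δ a) = a ⊗ 1`) is central in the twisted algebra `A_J`. -/
theorem statement6 (A B : Type*) [CommRing A] [HopfAlgebra ℂ A] [CommRing B]
    [HopfAlgebra ℂ B]
    (π : A →ₐ[ℂ] B) (hsurj : Function.Surjective π)
    (hcomul : Coalgebra.comul (R := ℂ) ∘ₗ π.toLinearMap
      = TensorProduct.map π.toLinearMap π.toLinearMap ∘ₗ Coalgebra.comul)
    (hcounit : Coalgebra.counit (R := ℂ) ∘ₗ π.toLinearMap = Coalgebra.counit)
    (hantipode : HopfAlgebra.antipode (R := ℂ) ∘ₗ π.toLinearMap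
      = π.toLinearMap ∘ₗ HopfAlgebra.antipode (R := ℂ))
    (c' : Hopf2Cocycle B) (c : Hopf2Cocycle A)
    (hc : c.J = c'.J ∘ₗ TensorProduct.map π.toLinearMap π.toLinearMap) :
    ∀ a : A, TensorProduct.map (LinearMap.id : A →ₗ[ℂ] A) π.toLinearMap
        (Coalgebra.comul (R := ℂ) a) = a ⊗ₜ[ℂ] (1 : B) →
      ∀ b : A, c.mulJ (a ⊗ₜ[ℂ] b) = c.mulJ (b ⊗ₜ[ℂ] a) :=
  statement6_general A B π hcounit c' c hc

end Twisting
end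
end

section
/- Let Γ be a free abelian group of finite rank (written multiplicatively), let σ : Γ × Γ → ℂ^× be a bicharacter, and let J_σ be the Hopf 2-cocycle for ℂ[Γ] determined by J_σ(g ⊗ h) = σ(g,h) for g, h ∈ Γ. Then J_σ is minimal if and only if the alternating bicharacter λ(g,h) := σ(g,h)σ(h,g)⁻¹ is nondegenerate, i.e. if λ(g,h) = 1 for all h ∈ Γ implies g = 1. -/
open TensorProduct

noncomputable section

namespace Twisting

variable (A : Type*) [CommRing A] [HopfAlgebra ℂ A]

variable {A}

/-- A realization of the commutative Hopf `ℂ`-algebra `A` as the group Hopf algebra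
`ℂ[Γ]` of the (multiplicative) abelian group `Γ`: a monoid homomorphism `of : Γ → A`
whose image is a `ℂ`-basis of `A` consisting of grouplike elements, with
`S(of g) = of g⁻¹`. -/
structure GroupLikeBasis (Γ : Type*) [CommGroup Γ] (A : Type*) [CommRing A]
    [HopfAlgebra ℂ A] where
  of : Γ →* A
  basis : Module.Basis Γ ℂ A
  basis_eq : ∀ g : Γ, basis g = of g
  comul_of : ∀ g : Γ, Coalgebra.comul (R := ℂ) (of g) = of g ⊗ₜ[ℂ] of g
  counit_of : ∀ g : Γ, Coalgebra.counit (R := ℂ) (of g) = (1 : ℂ)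
  antipode_of : ∀ g : Γ, HopfAlgebra.antipode (R := ℂ) (of g) = of g⁻¹

/-- `Γ` is a free abelian group of finite rank. -/
def IsFreeAbelianOfFiniteRank (Γ : Type*) [CommGroup Γ] : Prop :=
  ∃ n : ℕ, Nonempty (Γ ≃* Multiplicative (Fin n → ℤ))

/-!
On grouplike elements `g, h` the form `R^J` takes the value `λ(g,h)`, so in the basis `Γ` of
`ℂ[Γ]` the rows of `R^J` are the characters `λ(g, ·)`. By Dedekind's lemma distinct characters
are linearly independent, hence `R^J` is left nondegenerate exactly when `g ↦ λ(g, ·)` is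
injective, i.e. when `λ` is nondegenerate.
-/

lemma _root_.IsGroupLikeElem.tmul {R C D : Type*} [CommRing R] [AddCommGroup C] [Module R C]
    [Coalgebra R C] [AddCommGroup D] [Module R D] [Coalgebra R D] {x : C} {y : D}
    (hx : IsGroupLikeElem R x) (hy : IsGroupLikeElem R y) : IsGroupLikeElem R (x ⊗ₜ[R] y) where
  counit_eq_one := by simp [TensorProduct.counit_def, hx.counit_eq_one, hy.counit_eq_one]
  comul_eq_tmul_self := by
    simp [TensorProduct.comul_def, hx.comul_eq_tmul_self, hy.comul_eq_tmul_self]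

section Characters

open Function

variable {K A A' ι M : Type*} [Field K] [AddCommGroup A] [Module K A] [AddCommGroup A']
  [Module K A'] [Monoid M] {B : A →ₗ[K] A' →ₗ[K] K} {b : Module.Basis ι K A}
  {b' : Module.Basis M K A'} {χ : ι → M →* K}

lemma _root_.LinearMap.injective_of_separatingLeft_of_apply_basis (hB : ∀ i m, B (b i) (b' m) = χ i m)
    (hsep : B.SeparatingLeft) : Injective χ := by
  intro i j hij
  have hker : B (b i - b j) = 0 := b'.ext fun m => by simp [hB, hij]
  exact b.injective (sub_eq_zero.mp (hsep _ fun y => by simp [hker]))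

lemma _root_.LinearMap.separatingLeft_of_apply_basis_of_injective (hB : ∀ i m, B (b i) (b' m) = χ i m)
    (hχ : Injective χ) : B.SeparatingLeft := by
  intro a ha
  have hcomb : Finsupp.linearCombination K (fun i => ⇑(χ i)) (b.repr a) = 0 := by
    funext m
    rw [Pi.zero_apply, ← ha (b' m)]
    conv_rhs => rw [← b.linearCombination_repr a]
    simp [Finsupp.linearCombination_apply, Finsupp.sum, hB]
  have hLI := (linearIndependent_monoidHom M K).comp χ hχ
  simpa using linearIndependent_iff.mp hLI _ hcomb

lemma _root_.LinearMap.separatingLeft_iff_injective_of_apply_basis (hB : ∀ i m, B (b i) (b' m) = χ i m) :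
    B.SeparatingLeft ↔ Injective χ :=
  ⟨B.injective_of_separatingLeft_of_apply_basis hB,
    B.separatingLeft_of_apply_basis_of_injective hB⟩

end Characters

lemma _root_.MonoidHom.injective_unitsCoeHom_comp_iff {G M K : Type*} [Group G] [Monoid M]
    [CommMonoid K] (τ : G →* M →* Kˣ) :
    Function.Injective ((Units.coeHom K).comp ∘ τ) ↔
      ∀ g, (∀ m, τ g m = 1) → g = 1 := by
  have hcoe : Function.Injective ((Units.coeHom K).comp : (M →* Kˣ) → M →* K) :=
    fun _ _ h => (MonoidHom.cancel_left Units.val_injective).mp h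
  rw [hcoe.of_comp_iff, injective_iff_map_eq_one]
  simp only [MonoidHom.ext_iff, MonoidHom.one_apply]

section Convolution

variable {C : Type*} [AddCommMonoid C] [Module ℂ C] [Coalgebra ℂ C] {x : C}

lemma conv_apply_of_isGroupLikeElem (F G : C →ₗ[ℂ] ℂ) (hx : IsGroupLikeElem ℂ x) :
    conv F G x = F x * G x := by
  simp [conv, hx.comul_eq_tmul_self]

lemma mul_eq_one_of_conv_eq_counit {F G : C →ₗ[ℂ] ℂ} (hFG : conv F G = Coalgebra.counit)
    (hx : IsGroupLikeElem ℂ x) : F x * G x = 1 := by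
  rw [← conv_apply_of_isGroupLikeElem F G hx, hFG, hx.counit_eq_one]

end Convolution

lemma GroupLikeBasis.isGroupLikeElem_of {Γ : Type*} [CommGroup Γ] {A : Type*} [CommRing A]
    [HopfAlgebra ℂ A] (gb : GroupLikeBasis Γ A) (g : Γ) : IsGroupLikeElem ℂ (gb.of g) :=
  ⟨gb.counit_of g, gb.comul_of g⟩

namespace Hopf2Cocycle

variable {A : Type*} [CommRing A] [HopfAlgebra ℂ A] (c : Hopf2Cocycle A) {x y : A}

lemma RJ_tmul_of_isGroupLikeElem (hx : IsGroupLikeElem ℂ x) (hy : IsGroupLikeElem ℂ y) :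
    c.RJ (x ⊗ₜ[ℂ] y) = (c.J (y ⊗ₜ[ℂ] x))⁻¹ * c.J (x ⊗ₜ[ℂ] y) := by
  have hJinv :=
    eq_inv_of_mul_eq_one_right (mul_eq_one_of_conv_eq_counit c.conv_right_inv (hy.tmul hx))
  rw [RJ, conv_apply_of_isGroupLikeElem _ _ (hx.tmul hy)]
  simp [hJinv]

lemma minimal_iff_separatingLeft :
    c.Minimal ↔ ((TensorProduct.mk ℂ A A).compr₂ c.RJ).SeparatingLeft :=
  Iff.rfl

end Hopf2Cocycle

theorem statement9_general (Γ : Type*) [CommGroup Γ]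
    (A : Type*) [CommRing A] [HopfAlgebra ℂ A] (gb : GroupLikeBasis Γ A)
    (σ : Γ →* Γ →* ℂˣ) (c : Hopf2Cocycle A)
    (hc : ∀ g h : Γ, c.J (gb.of g ⊗ₜ[ℂ] gb.of h) = (σ g h : ℂ)) :
    c.Minimal ↔ ∀ g : Γ, (∀ h : Γ, σ g h * (σ h g)⁻¹ = 1) → g = 1 := by
  have hRJ : ∀ g h, (TensorProduct.mk ℂ A A).compr₂ c.RJ (gb.basis g) (gb.basis h)
      = ((Units.coeHom ℂ).comp ∘ (σ * σ.flip⁻¹)) g h := by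
    intro g h
    simp [gb.basis_eq, c.RJ_tmul_of_isGroupLikeElem (gb.isGroupLikeElem_of g)
      (gb.isGroupLikeElem_of h), hc, mul_comm]
  rw [c.minimal_iff_separatingLeft, LinearMap.separatingLeft_iff_injective_of_apply_basis hRJ,
    MonoidHom.injective_unitsCoeHom_comp_iff]
  rfl

/-- For a free abelian group `Γ` of finite rank, a bicharacter
`σ : Γ × Γ → ℂˣ` and the associated Hopf 2-cocycle `J_σ` for `ℂ[Γ]`:  `J_σ` is minimal
if and only if the alternating bicharacter `λ(g,h) = σ(g,h)σ(h,g)⁻¹` is nondegenerate. -/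
theorem statement9 (Γ : Type*) [CommGroup Γ] (hfree : IsFreeAbelianOfFiniteRank Γ)
    (A : Type*) [CommRing A] [HopfAlgebra ℂ A] (gb : GroupLikeBasis Γ A)
    (σ : Γ →* Γ →* ℂˣ) (c : Hopf2Cocycle A)
    (hc : ∀ g h : Γ, c.J (gb.of g ⊗ₜ[ℂ] gb.of h) = (σ g h : ℂ)) :
    c.Minimal ↔ ∀ g : Γ, (∀ h : Γ, σ g h * (σ h g)⁻¹ = 1) → g = 1 :=
  statement9_general Γ A gb σ c hc

end Twisting
end
end

section
/- Let A be a commutative Hopf ℂ-algebra, J a Hopf 2-cocycle for A, B ⊆ A a Hopf subalgebra, and z ∈ A an element such that Δ(z) − z ⊗ 1 − 1 ⊗ z ∈ B⁺ ⊗ B⁺ (where B⁺ = B ∩ ker ε) and A = B[z] is a polynomial ring in z over B. Then: (1) B is closed under the twisted multiplication ·_J, i.e. B is a subalgebra of A_J; (2) A_J is generated as a ℂ-algebra by B ∪ {z}; (3) for every b ∈ B, the commutator z ·_J b − b ·_J z lies in B; consequently δ(b) := z ·_J b − b ·_J z is a derivation of the subalgebra B_J and A_J is the Ore extension B_J[z;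 δ]. -/
open TensorProduct

noncomputable section

namespace Twisting

variable (A : Type*) [CommRing A] [HopfAlgebra ℂ A]

variable {A}

/-- The `·_J`-powers `z, z ·_J z, …` of an element `z` in the twisted algebra `A_J`. -/
def Hopf2Cocycle.zpowJ {A : Type*} [CommRing A] [HopfAlgebra ℂ A]
    (c : Hopf2Cocycle A) (z : A) : ℕ → A
  | 0 => 1
  | n + 1 => c.mulJ (z ⊗ₜ[ℂ] c.zpowJ z n)

/-!
Filter `A = B[z]` by `z`-degree, `A_{<n} = B + Bz + ⋯ + Bzⁿ⁻¹`. Since `Δz ≡ z ⊗ 1 + 1 ⊗ z`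
modulo `B ⊗ B`, the coproduct preserves this filtration and `Δ(b zᵐ) ≡ Δ(b) (zᵐ ⊗ 1)` modulo
terms of lower degree in the first factor. As `a ·_J b = Σ a₁b₁ J(a₂ ⊗ b₂)` only multiplies first
factors, `(b zᵐ) ·_J (b' zⁿ) ≡ (b ·_J b') zᵐ⁺ⁿ` modulo degree `< m + n`: twisting does not change
leading terms. Taking degrees `0` and `1` gives (1) and (3); the `·_J`-powers of `z` agree with the
ordinary powers up to lower order, so `(bₙ) ↦ Σ bₙ ·_J z^{·n}` is a unitriangular perturbation of
the isomorphism `B[z] ≅ A` and hence bijective, which gives (2) and the Ore basis. The Leibniz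
rule for `δ` is associativity of `·_J`, i.e. the cocycle identity read in the convolution algebra
of linear maps `A ⊗ A ⊗ A → A`.
-/

lemma apply_mem_of_mem_map₂_mk {R M N P Q X : Type*} [CommSemiring R]
    [AddCommMonoid M] [Module R M] [AddCommMonoid N] [Module R N] [AddCommMonoid P] [Module R P]
    [AddCommMonoid Q] [Module R Q] [AddCommMonoid X] [Module R X]
    (β : M ⊗[R] N →ₗ[R] P ⊗[R] Q →ₗ[R] X)
    {p : Submodule R M} {q : Submodule R N} {p' : Submodule R P} {q' : Submodule R Q}
    {r : Submodule R X}
    (h : ∀ m ∈ p, ∀ n ∈ q, ∀ m' ∈ p', ∀ n' ∈ q', β (m ⊗ₜ n) (m' ⊗ₜ n') ∈ r)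
    {s : M ⊗[R] N} {t : P ⊗[R] Q} (hs : s ∈ Submodule.map₂ (TensorProduct.mk R M N) p q)
    (ht : t ∈ Submodule.map₂ (TensorProduct.mk R P Q) p' q') : β s t ∈ r := by
  have ht' : ∀ m ∈ p, ∀ n ∈ q, β (m ⊗ₜ n) t ∈ r := fun m hm n hn =>
    (Submodule.map₂_le (r := r.comap (β (m ⊗ₜ n)))).2 (h m hm n hn) ht
  exact (Submodule.map₂_le (r := r.comap (β.flip t))).2 ht' hs

lemma bijective_of_sub_mem_map {R V W : Type*} [Ring R] [AddCommGroup V] [Module R V]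
    [AddCommGroup W] [Module R W] (F : ℕ → Submodule R V) (hF0 : F 0 = ⊥)
    (hexh : ∀ v, ∃ n, v ∈ F n) (T G : V →ₗ[R] W) (hG : Function.Bijective G)
    (hTG : ∀ n, ∀ v ∈ F (n + 1), T v - G v ∈ (F n).map G) : Function.Bijective T := by
  have hker : ∀ n, ∀ v ∈ F n, T v = 0 → v = 0 := by
    intro n
    induction n with
    | zero => simp [hF0]
    | succ n ih =>
      intro v hv hTv
      obtain ⟨u, hu, hGu⟩ := hTG n v hv
      have hvu : v = -u := hG.1 (by rw [map_neg, hGu, hTv, zero_sub, neg_neg])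
      exact ih v (hvu ▸ neg_mem hu) hTv
  have hrange : ∀ n, (F n).map G ≤ LinearMap.range T := by
    intro n
    induction n with
    | zero => simp [hF0]
    | succ n ih =>
      rintro _ ⟨v, hv, rfl⟩
      rw [← sub_sub_cancel (T v) (G v)]
      exact sub_mem (LinearMap.mem_range_self T v) (ih (hTG n v hv))
  refine ⟨(injective_iff_map_eq_zero T).2 fun v hv => ?_, fun w => ?_⟩
  · obtain ⟨n, hn⟩ := hexh v
    exact hker n v hn hv
  · obtain ⟨v, rfl⟩ := hG.2 w
    obtain ⟨n, hn⟩ := hexh v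
    exact hrange n ⟨v, hn, rfl⟩

section Convolution

open LinearMap WithConv Coalgebra

variable {R A C D : Type*} [CommSemiring R] [CommSemiring A] [Algebra R A]
  [AddCommMonoid C] [Module R C] [Coalgebra R C] [AddCommMonoid D] [Module R D] [Coalgebra R D]

lemma sum_counit_right_smul {d : D} {ι : Type*} (𝓡 : Coalgebra.Repr R d ι) :
    ∑ i ∈ 𝓡.index, counit (R := R) (𝓡.right i) • 𝓡.left i = d := by
  have h := congr(TensorProduct.rid R D $(sum_tmul_counit_eq (R := R) 𝓡))
  simpa only [map_sum, TensorProduct.rid_tmul, one_smul] using h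

lemma convMul_rTensor_counit (ν : A ⊗[R] D →ₗ[R] A) (φ : C →ₗ[R] A) (K : C →ₗ[R] R) :
    toConv (ν ∘ₗ TensorProduct.map φ LinearMap.id) *
        toConv (Algebra.linearMap R A ∘ₗ mul' R R ∘ₗ TensorProduct.map K counit) =
      toConv (ν ∘ₗ TensorProduct.map
        (toConv φ * toConv (Algebra.linearMap R A ∘ₗ K)).ofConv LinearMap.id) := by
  ext : 1
  refine TensorProduct.ext' fun c d => ?_
  conv_rhs => rw [← sum_counit_right_smul (ℛ R d)]
  rw [convMul_apply, TensorProduct.comul_tmul, comp_apply, TensorProduct.map_tmul, convMul_apply,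
    ← (ℛ R c).eq, ← (ℛ R d).eq]
  simp only [TensorProduct.sum_tmul, TensorProduct.tmul_sum, map_sum,
    AlgebraTensorModule.tensorTensorTensorComm_tmul, TensorProduct.map_tmul, comp_apply,
    id_apply, mul'_apply, Algebra.linearMap_apply, Algebra.algebraMap_eq_smul_one, mul_one,
    TensorProduct.tmul_smul, ← TensorProduct.smul_tmul', map_smul, smul_smul, Finset.smul_sum]
  simp only [mul_comm]

lemma convMul_lTensor_counit (ν : D ⊗[R] A →ₗ[R] A) (φ : C →ₗ[R] A) (K : C →ₗ[R] R) :
    toConv (ν ∘ₗ TensorProduct.map LinearMap.id φ) *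
        toConv (Algebra.linearMap R A ∘ₗ mul' R R ∘ₗ TensorProduct.map counit K) =
      toConv (ν ∘ₗ TensorProduct.map LinearMap.id
        (toConv φ * toConv (Algebra.linearMap R A ∘ₗ K)).ofConv) := by
  ext : 1
  refine TensorProduct.ext' fun d c => ?_
  conv_rhs => rw [← sum_counit_right_smul (ℛ R d)]
  rw [convMul_apply, TensorProduct.comul_tmul, comp_apply, TensorProduct.map_tmul, convMul_apply,
    ← (ℛ R c).eq, ← (ℛ R d).eq]
  simp only [TensorProduct.sum_tmul, TensorProduct.tmul_sum, map_sum,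
    AlgebraTensorModule.tensorTensorTensorComm_tmul, TensorProduct.map_tmul, comp_apply,
    id_apply, mul'_apply, Algebra.linearMap_apply, Algebra.algebraMap_eq_smul_one, mul_one,
    TensorProduct.tmul_smul, ← TensorProduct.smul_tmul', map_smul, smul_smul, Finset.smul_sum]
  simp only [mul_comm]

lemma mul'_comp_rTensor_mul' : mul' R A ∘ₗ TensorProduct.map (mul' R A) LinearMap.id =
    mul' R A ∘ₗ TensorProduct.map LinearMap.id (mul' R A) ∘ₗ
      (TensorProduct.assoc R A A A).toLinearMap :=
  TensorProduct.ext_threefold fun x y w => by simp [mul_assoc]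

lemma convMul_comp_assoc {E : Type*} [AddCommMonoid E] [Module R E] [Coalgebra R E]
    (f g : WithConv (C ⊗[R] (D ⊗[R] E) →ₗ[R] A)) :
    (f * g).ofConv ∘ₗ (TensorProduct.assoc R C D E).toLinearMap =
      (toConv (f.ofConv ∘ₗ (TensorProduct.assoc R C D E).toLinearMap) *
        toConv (g.ofConv ∘ₗ (TensorProduct.assoc R C D E).toLinearMap)).ofConv :=
  convMul_comp_coalgHom_distrib f g (Coalgebra.TensorProduct.assoc R R C D E).toCoalgHom

end Convolution

section Associativity

open LinearMap WithConv Coalgebra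

lemma algebraMap_comp_conv {A C : Type*} [CommRing A] [Algebra ℂ A]
    [AddCommGroup C] [Module ℂ C] [Coalgebra ℂ C] (F G : C →ₗ[ℂ] ℂ) :
    Algebra.linearMap ℂ A ∘ₗ conv F G =
      (toConv (Algebra.linearMap ℂ A ∘ₗ F) * toConv (Algebra.linearMap ℂ A ∘ₗ G)).ofConv :=
  algHom_comp_convMul_distrib (Algebra.ofId ℂ A) (toConv F) (toConv G)

lemma conv_comp_assoc {C D E : Type*} [AddCommGroup C] [Module ℂ C] [Coalgebra ℂ C]
    [AddCommGroup D] [Module ℂ D] [Coalgebra ℂ D] [AddCommGroup E] [Module ℂ E] [Coalgebra ℂ E]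
    (F G : C ⊗[ℂ] (D ⊗[ℂ] E) →ₗ[ℂ] ℂ) :
    conv F G ∘ₗ (TensorProduct.assoc ℂ C D E).toLinearMap =
      conv (F ∘ₗ (TensorProduct.assoc ℂ C D E).toLinearMap)
        (G ∘ₗ (TensorProduct.assoc ℂ C D E).toLinearMap) :=
  convMul_comp_assoc (toConv F) (toConv G)

namespace Hopf2Cocycle

variable {A : Type*} [CommRing A] [HopfAlgebra ℂ A] (c : Hopf2Cocycle A)

local notation "ι" => Algebra.linearMap ℂ A

lemma mulJ_eq_convMul : c.mulJ = (toConv (mul' ℂ A) * toConv (ι ∘ₗ c.J)).ofConv := by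
  have h : (TensorProduct.rid ℂ A).toLinearMap ∘ₗ TensorProduct.map (mul' ℂ A) c.J =
      mul' ℂ A ∘ₗ TensorProduct.map (mul' ℂ A) (ι ∘ₗ c.J) :=
    TensorProduct.ext' fun x y => by simp [Algebra.smul_def, mul_comm]
  rw [mulJ, LinearMap.convMul_def, ofConv_toConv, ← comp_assoc, h, comp_assoc]

lemma mulJ_comp_rTensor_mulJ :
    c.mulJ ∘ₗ TensorProduct.map c.mulJ LinearMap.id =
      (toConv (mul' ℂ A ∘ₗ TensorProduct.map (mul' ℂ A) LinearMap.id) *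
        toConv (ι ∘ₗ conv (c.J ∘ₗ TensorProduct.map (mul' ℂ A) LinearMap.id)
          (mul' ℂ ℂ ∘ₗ TensorProduct.map c.J Coalgebra.counit))).ofConv := by
  have h : toConv (c.mulJ ∘ₗ TensorProduct.map (mul' ℂ A) LinearMap.id) =
      toConv (mul' ℂ A ∘ₗ TensorProduct.map (mul' ℂ A) LinearMap.id) *
        toConv (ι ∘ₗ c.J ∘ₗ TensorProduct.map (mul' ℂ A) LinearMap.id) := by
    rw [mulJ_eq_convMul]
    exact congrArg toConv (convMul_comp_coalgHom_distrib _ _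
      (Coalgebra.TensorProduct.map (Bialgebra.mulCoalgHom ℂ A) (CoalgHom.id ℂ A)))
  rw [algebraMap_comp_conv, toConv_ofConv, ← mul_assoc, ← h, convMul_rTensor_counit,
    ofConv_toConv, ← mulJ_eq_convMul]

lemma mulJ_comp_lTensor_mulJ :
    c.mulJ ∘ₗ TensorProduct.map LinearMap.id c.mulJ =
      (toConv (mul' ℂ A ∘ₗ TensorProduct.map LinearMap.id (mul' ℂ A)) *
        toConv (ι ∘ₗ conv (c.J ∘ₗ TensorProduct.map LinearMap.id (mul' ℂ A))
          (mul' ℂ ℂ ∘ₗ TensorProduct.map Coalgebra.counit c.J))).ofConv := by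
  have h : toConv (c.mulJ ∘ₗ TensorProduct.map LinearMap.id (mul' ℂ A)) =
      toConv (mul' ℂ A ∘ₗ TensorProduct.map LinearMap.id (mul' ℂ A)) *
        toConv (ι ∘ₗ c.J ∘ₗ TensorProduct.map LinearMap.id (mul' ℂ A)) := by
    rw [mulJ_eq_convMul]
    exact congrArg toConv (convMul_comp_coalgHom_distrib _ _
      (Coalgebra.TensorProduct.map (CoalgHom.id ℂ A) (Bialgebra.mulCoalgHom ℂ A)))
  rw [algebraMap_comp_conv, toConv_ofConv, ← mul_assoc, ← h, convMul_lTensor_counit,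
    ofConv_toConv, ← mulJ_eq_convMul]

lemma mulJ_assoc_s14 (a b w : A) :
    c.mulJ (c.mulJ (a ⊗ₜ[ℂ] b) ⊗ₜ[ℂ] w) = c.mulJ (a ⊗ₜ[ℂ] c.mulJ (b ⊗ₜ[ℂ] w)) := by
  have h : c.mulJ ∘ₗ TensorProduct.map c.mulJ LinearMap.id =
      (c.mulJ ∘ₗ TensorProduct.map LinearMap.id c.mulJ) ∘ₗ
        (TensorProduct.assoc ℂ A A A).toLinearMap := by
    rw [mulJ_comp_rTensor_mulJ, c.cocycle, mulJ_comp_lTensor_mulJ, convMul_comp_assoc,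
      comp_assoc, comp_assoc, conv_comp_assoc, ← comp_assoc, ← comp_assoc, ← comp_assoc,
      mul'_comp_rTensor_mul']
    rfl
  simpa using congr($h ((a ⊗ₜ[ℂ] b) ⊗ₜ[ℂ] w))

lemma mulJ_commutator_mulJ (x b b' : A) :
    c.mulJ (x ⊗ₜ[ℂ] c.mulJ (b ⊗ₜ[ℂ] b')) - c.mulJ (c.mulJ (b ⊗ₜ[ℂ] b') ⊗ₜ[ℂ] x) =
      c.mulJ ((c.mulJ (x ⊗ₜ[ℂ] b) - c.mulJ (b ⊗ₜ[ℂ] x)) ⊗ₜ[ℂ] b') +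
        c.mulJ (b ⊗ₜ[ℂ] (c.mulJ (x ⊗ₜ[ℂ] b') - c.mulJ (b' ⊗ₜ[ℂ] x))) := by
  rw [TensorProduct.sub_tmul, map_sub, TensorProduct.tmul_sub, map_sub]
  linear_combination c.mulJ_assoc_s14 b x b' - c.mulJ_assoc_s14 x b b' - c.mulJ_assoc_s14 b b' x

end Hopf2Cocycle

end Associativity

section Filtration

variable {R A : Type*} [CommRing R] [CommRing A] [Algebra R A] (B : Subalgebra R A) (z : A)

def evalCoeffs : (ℕ →₀ B) →ₗ[R] A :=
  Finsupp.lsum R fun n => LinearMap.mulRight R (z ^ n) ∘ₗ B.val.toLinearMap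

lemma evalCoeffs_apply (f : ℕ →₀ B) : evalCoeffs B z f = f.sum fun n b => (b : A) * z ^ n :=
  rfl

lemma evalCoeffs_single (n : ℕ) (b : B) : evalCoeffs B z (Finsupp.single n b) = b * z ^ n := by
  simp [evalCoeffs_apply]

lemma evalCoeffs_eq_aeval (f : ℕ →₀ B) :
    evalCoeffs B z f = Polynomial.aeval z (Polynomial.ofFinsupp (AddMonoidAlgebra.ofCoeff f)) := by
  rw [evalCoeffs_apply, Polynomial.aeval_def, Polynomial.eval₂_eq_sum, Polynomial.sum_def,
    Polynomial.support_ofFinsupp]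
  refine Finset.sum_congr rfl fun n _ => ?_
  simp [Polynomial.coeff_ofFinsupp, Subalgebra.algebraMap_eq]

def degLT (n : ℕ) : Submodule R A :=
  (Finsupp.supported B R (Set.Iio n)).map (evalCoeffs B z)

lemma degLT_mono : Monotone (degLT B z) := fun _ _ h =>
  Submodule.map_mono (Finsupp.supported_mono (Set.Iio_subset_Iio h))

variable {B z}

lemma mul_pow_mem_degLT {x : A} (hx : x ∈ B) {k n : ℕ} (h : k < n) : x * z ^ k ∈ degLT B z n :=
  ⟨Finsupp.single k ⟨x, hx⟩, Finsupp.single_mem_supported R _ h, evalCoeffs_single ..⟩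

lemma pow_mem_degLT {k n : ℕ} (h : k < n) : z ^ k ∈ degLT B z n := by
  simpa using mul_pow_mem_degLT B.one_mem h

lemma one_mem_degLT {n : ℕ} (h : 0 < n) : (1 : A) ∈ degLT B z n := by
  simpa using pow_mem_degLT (z := z) (B := B) h

lemma self_mem_degLT {n : ℕ} (h : 1 < n) : z ∈ degLT B z n := by
  simpa using pow_mem_degLT (z := z) (B := B) h

lemma le_degLT_one : B.toSubmodule ≤ degLT B z 1 := fun x hx => by
  simpa using mul_pow_mem_degLT (z := z) hx zero_lt_one

lemma degLT_one_le : degLT B z 1 ≤ B.toSubmodule := by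
  rintro _ ⟨f, hf, rfl⟩
  rw [evalCoeffs_apply]
  refine Submodule.sum_mem _ fun k hk => ?_
  obtain rfl : k = 0 := Nat.lt_one_iff.1 (hf hk)
  simp

lemma mul_mem_degLT {a b n : ℕ} (h : a + b ≤ n + 1) {x y : A} (hx : x ∈ degLT B z a)
    (hy : y ∈ degLT B z b) : x * y ∈ degLT B z n := by
  obtain ⟨f, hf, rfl⟩ := hx
  obtain ⟨g, hg, rfl⟩ := hy
  rw [evalCoeffs_apply, evalCoeffs_apply, Finsupp.sum, Finsupp.sum, Finset.sum_mul_sum]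
  refine Submodule.sum_mem _ fun k hk => Submodule.sum_mem _ fun l hl => ?_
  have hkl : k + l < n := by
    have := hf hk; have := hg hl; simp only [Set.mem_Iio] at *; omega
  rw [mul_mul_mul_comm, ← pow_add]
  exact mul_pow_mem_degLT (B.mul_mem (f k).2 (g l).2) hkl

variable (B z)

def degLT₂ (i j : ℕ) : Submodule R (A ⊗[R] A) :=
  Submodule.map₂ (TensorProduct.mk R A A) (degLT B z i) (degLT B z j)

variable {B z}

lemma tmul_mem_degLT₂ {i j : ℕ} {x y : A} (hx : x ∈ degLT B z i) (hy : y ∈ degLT B z j) :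
    x ⊗ₜ[R] y ∈ degLT₂ B z i j :=
  Submodule.apply_mem_map₂ _ hx hy

lemma degLT₂_mono {i j i' j' : ℕ} (hi : i ≤ i') (hj : j ≤ j') :
    degLT₂ B z i j ≤ degLT₂ B z i' j' :=
  Submodule.map₂_le_map₂ (degLT_mono B z hi) (degLT_mono B z hj)

lemma mul_mem_degLT₂ {i j i' j' k l : ℕ} (hi : i + i' ≤ k + 1) (hj : j + j' ≤ l + 1)
    {s t : A ⊗[R] A} (hs : s ∈ degLT₂ B z i j) (ht : t ∈ degLT₂ B z i' j') :
    s * t ∈ degLT₂ B z k l :=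
  apply_mem_of_mem_map₂_mk (LinearMap.mul R (A ⊗[R] A)) (fun _ hx _ hy _ hx' _ hy' => by
    simpa using tmul_mem_degLT₂ (mul_mem_degLT hi hx hx') (mul_mem_degLT hj hy hy')) hs ht

end Filtration

section Comultiplication

open Coalgebra

variable {R A : Type*} [CommRing R] [CommRing A] [Bialgebra R A] {B : Subalgebra R A} {z : A}
  (hB : ∀ b ∈ B, comul (R := R) b ∈
    Submodule.map₂ (TensorProduct.mk R A A) B.toSubmodule B.toSubmodule)
  (hz : comul (R := R) z - z ⊗ₜ[R] (1 : A) - (1 : A) ⊗ₜ[R] z ∈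
    Submodule.map₂ (TensorProduct.mk R A A) B.toSubmodule B.toSubmodule)

include hB in
lemma comul_mem_degLT₂_of_mem {b : A} (hb : b ∈ B) : comul (R := R) b ∈ degLT₂ B z 1 1 :=
  Submodule.map₂_le_map₂ le_degLT_one le_degLT_one (hB b hb)

include hz in
lemma comul_sub_mem_degLT₂ :
    comul (R := R) z - z ⊗ₜ[R] (1 : A) - (1 : A) ⊗ₜ[R] z ∈ degLT₂ B z 1 1 :=
  Submodule.map₂_le_map₂ le_degLT_one le_degLT_one hz

include hz in
lemma comul_self_mem_degLT₂ : comul (R := R) z ∈ degLT₂ B z 2 2 := by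
  have h1 : z ⊗ₜ[R] (1 : A) ∈ degLT₂ B z 2 2 :=
    tmul_mem_degLT₂ (self_mem_degLT one_lt_two) (one_mem_degLT two_pos)
  have h2 : (1 : A) ⊗ₜ[R] z ∈ degLT₂ B z 2 2 :=
    tmul_mem_degLT₂ (one_mem_degLT two_pos) (self_mem_degLT one_lt_two)
  simpa using add_mem (add_mem h1 h2) (degLT₂_mono one_le_two one_le_two (comul_sub_mem_degLT₂ hz))

include hz in
lemma comul_pow_sub_mem_degLT₂ (m : ℕ) :
    comul (R := R) (z ^ m) - (z ^ m) ⊗ₜ[R] (1 : A) ∈ degLT₂ B z m (m + 1) := by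
  induction m with
  | zero => simp [Algebra.TensorProduct.one_def]
  | succ m ih =>
    set w := comul (R := R) z - z ⊗ₜ[R] (1 : A) - (1 : A) ⊗ₜ[R] z
    have h1 : (z ^ m) ⊗ₜ[R] z ∈ degLT₂ B z (m + 1) (m + 2) :=
      tmul_mem_degLT₂ (pow_mem_degLT m.lt_succ_self) (self_mem_degLT (by omega))
    have h2 : ((z ^ m) ⊗ₜ[R] (1 : A)) * w ∈ degLT₂ B z (m + 1) (m + 2) :=
      mul_mem_degLT₂ le_rfl (by omega)
        (tmul_mem_degLT₂ (pow_mem_degLT m.lt_succ_self) (one_mem_degLT zero_lt_one))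
        (comul_sub_mem_degLT₂ hz)
    have h3 := mul_mem_degLT₂ (k := m + 1) (l := m + 2) (by omega) (by omega) ih
      (comul_self_mem_degLT₂ hz)
    have key : comul (R := R) (z ^ (m + 1)) - (z ^ (m + 1)) ⊗ₜ[R] (1 : A) =
        (z ^ m) ⊗ₜ[R] z + ((z ^ m) ⊗ₜ[R] (1 : A)) * w +
          (comul (R := R) (z ^ m) - (z ^ m) ⊗ₜ[R] (1 : A)) * comul (R := R) z := by
      simp only [w, pow_succ, Bialgebra.comul_mul, mul_sub, sub_mul,
        Algebra.TensorProduct.tmul_mul_tmul, mul_one, one_mul]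
      abel
    rw [key]
    exact add_mem (add_mem h1 h2) h3

include hz in
lemma comul_pow_mem_degLT₂ (m : ℕ) : comul (R := R) (z ^ m) ∈ degLT₂ B z (m + 1) (m + 1) := by
  rw [← sub_add_cancel (comul (R := R) (z ^ m)) ((z ^ m) ⊗ₜ[R] (1 : A))]
  exact add_mem (degLT₂_mono m.le_succ le_rfl (comul_pow_sub_mem_degLT₂ hz m))
    (tmul_mem_degLT₂ (pow_mem_degLT m.lt_succ_self) (one_mem_degLT m.succ_pos))

include hB hz in
lemma comul_mul_pow_sub_mem_degLT₂ {b : A} (hb : b ∈ B) (m : ℕ) :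
    comul (R := R) (b * z ^ m) - comul (R := R) b * ((z ^ m) ⊗ₜ[R] (1 : A)) ∈
      degLT₂ B z m (m + 1) := by
  rw [Bialgebra.comul_mul, ← mul_sub]
  exact mul_mem_degLT₂ (by omega) (by omega) (comul_mem_degLT₂_of_mem hB hb)
    (comul_pow_sub_mem_degLT₂ hz m)

include hB hz in
lemma comul_mem_degLT₂ {n : ℕ} {x : A} (hx : x ∈ degLT B z n) :
    comul (R := R) x ∈ degLT₂ B z n n := by
  obtain ⟨f, hf, rfl⟩ := hx
  rw [evalCoeffs_apply, Finsupp.sum, map_sum]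
  refine Submodule.sum_mem _ fun k hk => ?_
  have hkn : k + 1 ≤ n := hf hk
  rw [Bialgebra.comul_mul]
  exact mul_mem_degLT₂ (by omega) (by omega) (comul_mem_degLT₂_of_mem hB (f k).2)
    (comul_pow_mem_degLT₂ hz k)

end Comultiplication

section LeadingTerms

open LinearMap Coalgebra

namespace Hopf2Cocycle

variable {A : Type*} [CommRing A] [HopfAlgebra ℂ A] (c : Hopf2Cocycle A)

-- `·_J` with the coproducts of the two factors kept apart (`mulJ_tmul`), so that the degree
-- estimates can bound them separately.
def twist : (A ⊗[ℂ] A) ⊗[ℂ] (A ⊗[ℂ] A) →ₗ[ℂ] A :=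
  (TensorProduct.rid ℂ A).toLinearMap ∘ₗ TensorProduct.map (mul' ℂ A) c.J ∘ₗ
    (TensorProduct.tensorTensorTensorComm ℂ A A A A).toLinearMap

lemma twist_tmul (u u' v v' : A) :
    c.twist ((u ⊗ₜ[ℂ] u') ⊗ₜ[ℂ] (v ⊗ₜ[ℂ] v')) = c.J (u' ⊗ₜ[ℂ] v') • (u * v) := by
  simp [twist]

lemma mulJ_tmul (x y : A) :
    c.mulJ (x ⊗ₜ[ℂ] y) = c.twist (comul (R := ℂ) x ⊗ₜ[ℂ] comul (R := ℂ) y) := by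
  simp [mulJ, twist, TensorProduct.comul_tmul, AlgebraTensorModule.tensorTensorTensorComm_eq]

lemma one_mulJ (a : A) : c.mulJ ((1 : A) ⊗ₜ[ℂ] a) = a := by
  rw [mulJ_tmul, Bialgebra.comul_one, Algebra.TensorProduct.one_def, ← (ℛ ℂ a).eq,
    TensorProduct.tmul_sum, map_sum]
  simp only [twist_tmul, c.norm_left, one_mul]
  exact sum_counit_right_smul _

lemma mulJ_one (a : A) : c.mulJ (a ⊗ₜ[ℂ] (1 : A)) = a := by
  rw [mulJ_tmul, Bialgebra.comul_one, Algebra.TensorProduct.one_def, ← (ℛ ℂ a).eq,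
    TensorProduct.sum_tmul, map_sum]
  simp only [twist_tmul, c.norm_right, mul_one]
  exact sum_counit_right_smul _

lemma twist_mul_pow_tmul_mul_pow (z : A) (m n : ℕ) (s t : A ⊗[ℂ] A) :
    c.twist ((s * ((z ^ m) ⊗ₜ[ℂ] (1 : A))) ⊗ₜ[ℂ] (t * ((z ^ n) ⊗ₜ[ℂ] (1 : A)))) =
      c.twist (s ⊗ₜ[ℂ] t) * z ^ (m + n) := by
  have h : c.twist ∘ₗ TensorProduct.map (LinearMap.mulRight ℂ ((z ^ m) ⊗ₜ[ℂ] (1 : A)))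
        (LinearMap.mulRight ℂ ((z ^ n) ⊗ₜ[ℂ] (1 : A))) =
      LinearMap.mulRight ℂ (z ^ (m + n)) ∘ₗ c.twist :=
    TensorProduct.ext_fourfold' fun u u' v v' => by
      simp only [comp_apply, TensorProduct.map_tmul, mulRight_apply,
        Algebra.TensorProduct.tmul_mul_tmul, mul_one, twist_tmul, smul_mul_assoc]
      ring_nf
  exact congr($h (s ⊗ₜ[ℂ] t))

lemma zpowJ_mem {P : Submodule ℂ A} {z : A} (h1 : 1 ∈ P) (hz : z ∈ P)
    (hP : ∀ x ∈ P, ∀ y ∈ P, c.mulJ (x ⊗ₜ[ℂ] y) ∈ P) (n : ℕ) : c.zpowJ z n ∈ P := by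
  induction n with
  | zero => exact h1
  | succ n ih => exact hP z hz _ ih

variable (B : Subalgebra ℂ A) (z : A)

def sumMulJZpowJ : (ℕ →₀ B) →ₗ[ℂ] A :=
  Finsupp.lsum ℂ fun n =>
    c.mulJ ∘ₗ (TensorProduct.mk ℂ A A).flip (c.zpowJ z n) ∘ₗ B.val.toLinearMap

lemma sumMulJZpowJ_apply (f : ℕ →₀ B) :
    c.sumMulJZpowJ B z f = f.sum fun n b => c.mulJ ((b : A) ⊗ₜ[ℂ] c.zpowJ z n) :=
  rfl

variable {B z}

lemma eq_top_of_mulJ_mem (hsurj : Function.Surjective (c.sumMulJZpowJ B z))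
    {P : Submodule ℂ A} (hBP : (B : Set A) ⊆ P) (hzP : z ∈ P)
    (hP : ∀ x ∈ P, ∀ y ∈ P, c.mulJ (x ⊗ₜ[ℂ] y) ∈ P) : P = ⊤ := by
  refine eq_top_iff.2 fun a _ => ?_
  obtain ⟨f, rfl⟩ := hsurj a
  exact Submodule.finsuppSum_mem _ _ _ _ fun n _ =>
    hP _ (hBP (f n).2) _ (c.zpowJ_mem (hBP B.one_mem) hzP hP n)

lemma twist_mem_degLT {i j i' j' n : ℕ} (h : i + i' ≤ n + 1) {s t : A ⊗[ℂ] A}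
    (hs : s ∈ degLT₂ B z i j) (ht : t ∈ degLT₂ B z i' j') : c.twist (s ⊗ₜ[ℂ] t) ∈ degLT B z n :=
  apply_mem_of_mem_map₂_mk ((TensorProduct.mk ℂ _ _).compr₂ c.twist) (fun _ hx _ _ _ hx' _ _ => by
    simpa [twist_tmul] using Submodule.smul_mem _ _ (mul_mem_degLT h hx hx')) hs ht

variable (hB : ∀ b ∈ B, comul (R := ℂ) b ∈
    Submodule.map₂ (TensorProduct.mk ℂ A A) B.toSubmodule B.toSubmodule)
  (hz : comul (R := ℂ) z - z ⊗ₜ[ℂ] (1 : A) - (1 : A) ⊗ₜ[ℂ] z ∈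
    Submodule.map₂ (TensorProduct.mk ℂ A A) B.toSubmodule B.toSubmodule)

include hB hz

lemma mulJ_mem_degLT {a b n : ℕ} (h : a + b ≤ n + 1) {x y : A} (hx : x ∈ degLT B z a)
    (hy : y ∈ degLT B z b) : c.mulJ (x ⊗ₜ[ℂ] y) ∈ degLT B z n := by
  rw [mulJ_tmul]
  exact c.twist_mem_degLT h (comul_mem_degLT₂ hB hz hx) (comul_mem_degLT₂ hB hz hy)

lemma mulJ_mem {x y : A} (hx : x ∈ B) (hy : y ∈ B) : c.mulJ (x ⊗ₜ[ℂ] y) ∈ B :=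
  degLT_one_le (c.mulJ_mem_degLT hB hz le_rfl (le_degLT_one hx) (le_degLT_one hy))

lemma mulJ_mul_pow_sub_mem_degLT {x y : A} (hx : x ∈ B) (hy : y ∈ B) (m n : ℕ) :
    c.mulJ ((x * z ^ m) ⊗ₜ[ℂ] (y * z ^ n)) - c.mulJ (x ⊗ₜ[ℂ] y) * z ^ (m + n) ∈
      degLT B z (m + n) := by
  set P := comul (R := ℂ) x * ((z ^ m) ⊗ₜ[ℂ] (1 : A))
  set Q := comul (R := ℂ) y * ((z ^ n) ⊗ₜ[ℂ] (1 : A))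
  have hP : P ∈ degLT₂ B z (m + 1) 1 := mul_mem_degLT₂ (by omega) le_rfl
    (comul_mem_degLT₂_of_mem hB hx) (tmul_mem_degLT₂ (pow_mem_degLT m.lt_succ_self)
      (one_mem_degLT zero_lt_one))
  have hr := comul_mul_pow_sub_mem_degLT₂ hB hz hx m
  have hr' := comul_mul_pow_sub_mem_degLT₂ hB hz hy n
  have hyz : comul (R := ℂ) (y * z ^ n) ∈ degLT₂ B z (n + 1) (n + 1) :=
    comul_mem_degLT₂ hB hz (mul_pow_mem_degLT hy n.lt_succ_self)
  have expand : c.mulJ ((x * z ^ m) ⊗ₜ[ℂ] (y * z ^ n)) - c.mulJ (x ⊗ₜ[ℂ] y) * z ^ (m + n) =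
      c.twist (P ⊗ₜ[ℂ] (comul (R := ℂ) (y * z ^ n) - Q)) +
        c.twist ((comul (R := ℂ) (x * z ^ m) - P) ⊗ₜ[ℂ] comul (R := ℂ) (y * z ^ n)) := by
    rw [mulJ_tmul, mulJ_tmul, ← twist_mul_pow_tmul_mul_pow, TensorProduct.tmul_sub,
      TensorProduct.sub_tmul, map_sub, map_sub]
    abel
  rw [expand]
  exact add_mem (c.twist_mem_degLT (by omega) hP hr') (c.twist_mem_degLT (by omega) hr hyz)

lemma mulJ_sub_mulJ_mem {b : A} (hb : b ∈ B) : c.mulJ (z ⊗ₜ[ℂ] b) - c.mulJ (b ⊗ₜ[ℂ] z) ∈ B := by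
  have h₁ := c.mulJ_mul_pow_sub_mem_degLT hB hz B.one_mem hb 1 0
  have h₂ := c.mulJ_mul_pow_sub_mem_degLT hB hz hb B.one_mem 0 1
  simp only [pow_one, pow_zero, one_mul, mul_one, one_mulJ, mulJ_one, zero_add, add_zero] at h₁ h₂
  exact degLT_one_le (by simpa using sub_mem h₁ h₂)

lemma zpowJ_sub_pow_mem_degLT (n : ℕ) : c.zpowJ z n - z ^ n ∈ degLT B z n := by
  induction n with
  | zero => simp [zpowJ]
  | succ n ih =>
    have h₁ := c.mulJ_mul_pow_sub_mem_degLT hB hz B.one_mem B.one_mem 1 n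
    simp only [pow_one, one_mul, one_mulJ, add_comm 1 n] at h₁
    have h₂ := c.mulJ_mem_degLT hB hz (n := n + 1) (by omega)
      (self_mem_degLT (n := 2) one_lt_two) ih
    rw [TensorProduct.tmul_sub, map_sub] at h₂
    have : c.zpowJ z (n + 1) - z ^ (n + 1) =
        (c.mulJ (z ⊗ₜ[ℂ] (z ^ n)) - z ^ (n + 1)) +
          (c.mulJ (z ⊗ₜ[ℂ] c.zpowJ z n) - c.mulJ (z ⊗ₜ[ℂ] (z ^ n))) := by
      rw [zpowJ]; abel
    rw [this]
    exact add_mem h₁ h₂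

lemma mulJ_zpowJ_sub_mem_degLT {b : A} (hb : b ∈ B) (k : ℕ) :
    c.mulJ (b ⊗ₜ[ℂ] c.zpowJ z k) - b * z ^ k ∈ degLT B z k := by
  have h₁ := c.mulJ_mul_pow_sub_mem_degLT hB hz hb B.one_mem 0 k
  simp only [pow_zero, mul_one, one_mul, mulJ_one, zero_add] at h₁
  have h₂ := c.mulJ_mem_degLT hB hz (n := k) (by omega) (le_degLT_one hb)
    (c.zpowJ_sub_pow_mem_degLT hB hz k)
  rw [TensorProduct.tmul_sub, map_sub] at h₂
  simpa using add_mem h₁ h₂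

lemma bijective_sumMulJZpowJ (hpoly : Function.Bijective
      (fun p : Polynomial B => (Polynomial.aeval z p : A))) :
    Function.Bijective (c.sumMulJZpowJ B z) := by
  refine bijective_of_sub_mem_map (fun n => Finsupp.supported B ℂ (Set.Iio n)) (by simp)
    (fun f => ⟨f.support.sup (fun k => k) + 1,
      fun k hk => Nat.lt_succ_of_le (Finset.le_sup (f := fun k => k) hk)⟩)
    _ (evalCoeffs B z) ?_ fun n f hf => ?_
  · have he : Function.Bijective fun f : ℕ →₀ B =>
        Polynomial.ofFinsupp (AddMonoidAlgebra.ofCoeff f) :=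
      (AddMonoidAlgebra.coeffEquiv.symm.trans (Polynomial.toFinsuppIso B).symm.toEquiv).bijective
    convert hpoly.comp he using 1
    exact funext (evalCoeffs_eq_aeval B z)
  · rw [sumMulJZpowJ_apply, evalCoeffs_apply, Finsupp.sum, Finsupp.sum, ← Finset.sum_sub_distrib]
    exact Submodule.sum_mem _ fun k hk => degLT_mono B z (Nat.le_of_lt_succ (hf hk))
      (c.mulJ_zpowJ_sub_mem_degLT hB hz (f k).2 k)

end Hopf2Cocycle

end LeadingTerms

theorem statement14_general (A : Type*) [CommRing A] [HopfAlgebra ℂ A] (c : Hopf2Cocycle A)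
    (B : Subalgebra ℂ A)
    (hBcoalg : ∀ x ∈ B, Coalgebra.comul (R := ℂ) x ∈
      LinearMap.range (TensorProduct.map B.toSubmodule.subtype B.toSubmodule.subtype))
    (z : A)
    (hz : Coalgebra.comul (R := ℂ) z - z ⊗ₜ[ℂ] (1 : A) - (1 : A) ⊗ₜ[ℂ] z ∈
      LinearMap.range (TensorProduct.map
        (B.toSubmodule ⊓ LinearMap.ker (Coalgebra.counit (R := ℂ) (A := A))).subtype
        (B.toSubmodule ⊓ LinearMap.ker (Coalgebra.counit (R := ℂ) (A := A))).subtype))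
    (hpoly : Function.Bijective
      (fun p : Polynomial ↥B => (Polynomial.aeval z p : A))) :
    (∀ x ∈ B, ∀ y ∈ B, c.mulJ (x ⊗ₜ[ℂ] y) ∈ B) ∧
    (∀ P : Submodule ℂ A, (B : Set A) ⊆ (P : Set A) → z ∈ P →
      (∀ x ∈ P, ∀ y ∈ P, c.mulJ (x ⊗ₜ[ℂ] y) ∈ P) → P = ⊤) ∧
    (∀ b ∈ B, c.mulJ (z ⊗ₜ[ℂ] b) - c.mulJ (b ⊗ₜ[ℂ] z) ∈ B) ∧
    (∀ b ∈ B, ∀ b' ∈ B,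
      c.mulJ (z ⊗ₜ[ℂ] c.mulJ (b ⊗ₜ[ℂ] b')) - c.mulJ (c.mulJ (b ⊗ₜ[ℂ] b') ⊗ₜ[ℂ] z)
        = c.mulJ ((c.mulJ (z ⊗ₜ[ℂ] b) - c.mulJ (b ⊗ₜ[ℂ] z)) ⊗ₜ[ℂ] b')
          + c.mulJ (b ⊗ₜ[ℂ] (c.mulJ (z ⊗ₜ[ℂ] b') - c.mulJ (b' ⊗ₜ[ℂ] z)))) ∧
    Function.Bijective (fun f : ℕ →₀ ↥B =>
      f.sum fun n b => c.mulJ ((b : A) ⊗ₜ[ℂ] c.zpowJ z n)) := by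
  have hB : ∀ x ∈ B, Coalgebra.comul (R := ℂ) x ∈
      Submodule.map₂ (TensorProduct.mk ℂ A A) B.toSubmodule B.toSubmodule := fun x hx => by
    rw [← TensorProduct.range_mapIncl]
    exact hBcoalg x hx
  have hz' : Coalgebra.comul (R := ℂ) z - z ⊗ₜ[ℂ] (1 : A) - (1 : A) ⊗ₜ[ℂ] z ∈
      Submodule.map₂ (TensorProduct.mk ℂ A A) B.toSubmodule B.toSubmodule := by
    rw [← TensorProduct.range_mapIncl]
    exact TensorProduct.range_mapIncl_mono inf_le_left inf_le_left hz
  have hbij := c.bijective_sumMulJZpowJ hB hz' hpoly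
  exact ⟨fun x hx y hy => c.mulJ_mem hB hz' hx hy,
    fun P hBP hzP hP => c.eq_top_of_mulJ_mem hbij.2 hBP hzP hP,
    fun b hb => c.mulJ_sub_mulJ_mem hB hz' hb,
    fun b _ b' _ => c.mulJ_commutator_mulJ z b b', hbij⟩

/-- Let `A` be a commutative Hopf `ℂ`-algebra, `J` a Hopf 2-cocycle for
`A`, `B ⊆ A` a Hopf subalgebra and `z ∈ A` with `Δ(z) - z ⊗ 1 - 1 ⊗ z ∈ B⁺ ⊗ B⁺` and
`A = B[z]` a polynomial ring over `B`.  Then (1) `B` is a subalgebra of `A_J`; (2) `A_J` is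
generated by `B ∪ {z}`; (3) `z ·_J b - b ·_J z ∈ B` for all `b ∈ B`; consequently
`δ(b) = z ·_J b - b ·_J z` is a derivation of `B_J` and `A_J` is the Ore extension
`B_J[z; δ]` (i.e. a free left `B_J`-module on the `·_J`-powers of `z`, with the
commutation rule (3)). -/
theorem statement14 (A : Type*) [CommRing A] [HopfAlgebra ℂ A] (c : Hopf2Cocycle A)
    (B : Subalgebra ℂ A)
    (hBcoalg : ∀ x ∈ B, Coalgebra.comul (R := ℂ) x ∈
      LinearMap.range (TensorProduct.map B.toSubmodule.subtype B.toSubmodule.subtype))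
    (hBantipode : ∀ x ∈ B, HopfAlgebra.antipode (R := ℂ) x ∈ B)
    (z : A)
    (hz : Coalgebra.comul (R := ℂ) z - z ⊗ₜ[ℂ] (1 : A) - (1 : A) ⊗ₜ[ℂ] z ∈
      LinearMap.range (TensorProduct.map
        (B.toSubmodule ⊓ LinearMap.ker (Coalgebra.counit (R := ℂ) (A := A))).subtype
        (B.toSubmodule ⊓ LinearMap.ker (Coalgebra.counit (R := ℂ) (A := A))).subtype))
    (hpoly : Function.Bijective
      (fun p : Polynomial ↥B => (Polynomial.aeval z p : A))) :
    (∀ x ∈ B, ∀ y ∈ B, c.mulJ (x ⊗ₜ[ℂ] y) ∈ B) ∧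
    (∀ P : Submodule ℂ A, (B : Set A) ⊆ (P : Set A) → z ∈ P →
      (∀ x ∈ P, ∀ y ∈ P, c.mulJ (x ⊗ₜ[ℂ] y) ∈ P) → P = ⊤) ∧
    (∀ b ∈ B, c.mulJ (z ⊗ₜ[ℂ] b) - c.mulJ (b ⊗ₜ[ℂ] z) ∈ B) ∧
    (∀ b ∈ B, ∀ b' ∈ B,
      c.mulJ (z ⊗ₜ[ℂ] c.mulJ (b ⊗ₜ[ℂ] b')) - c.mulJ (c.mulJ (b ⊗ₜ[ℂ] b') ⊗ₜ[ℂ] z)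
        = c.mulJ ((c.mulJ (z ⊗ₜ[ℂ] b) - c.mulJ (b ⊗ₜ[ℂ] z)) ⊗ₜ[ℂ] b')
          + c.mulJ (b ⊗ₜ[ℂ] (c.mulJ (z ⊗ₜ[ℂ] b') - c.mulJ (b' ⊗ₜ[ℂ] z)))) ∧
    Function.Bijective (fun f : ℕ →₀ ↥B =>
      f.sum fun n b => c.mulJ ((b : A) ⊗ₜ[ℂ] c.zpowJ z n)) :=
  statement14_general A c B hBcoalg z hz hpoly

end Twisting
end
end
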